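/- arXiv:2210.04652 — 9 statements merged into one kernel-verified Lean document; each statement's English description precedes it below -/
import Mathlib

section
/- For every number of colors c ≥ 2, there exists a feasible strategy for the Static Black-Peg AB Game with 2 pegs and c colors consisting of exactly ⌈4c/3⌉ − 2 questions. -/
/-- The answer of a question `Q` to a secret `S`: the number of pegs where they agree. -/
def answer {p c : ℕ} (Q S : Fin p → Fin c) : ℕ :=
  (Finset.univ.filter fun i => Q i = S i).card

/-- A strategy (a list of pairwise distinct injective codes) is feasible if the list of
answers determines every injective secret uniquely. -/
def Feasible {p c : ℕ} (qs : List (Fin p → Fin c)) : Prop :=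
  qs.Nodup ∧ (∀ Q ∈ qs, Function.Injective Q) ∧
    ∀ S S' : Fin p → Fin c, Function.Injective S → Function.Injective S' →
      qs.map (fun Q => answer Q S) = qs.map (fun Q => answer Q S') → S = S'

/-- The number of questions of the strategy `qs` having color `q` on peg `i`. -/
def occ {p c : ℕ} (qs : List (Fin p → Fin c)) (i : Fin p) (q : Fin c) : ℕ :=
  qs.countP fun Q => decide (Q i = q)

/-!
Group the colors into blocks `{3g, 3g+1, 3g+2}` and write `a, b₁, b₂` for the colors of a block.
The four questions `(a, b₁), (a, b₂), (b₁, a), (b₂, a)` reveal, for each peg, which of `a, b₁, b₂`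
the secret puts there, or that it uses none of them. Write `c = 3k + r + 1` with `r < 3`: the
`k` full blocks determine every peg colored below `3k`, and the `r + 1` leftover colors are
resolved by `r` more questions, using that the two pegs of a secret have distinct colors.
This gives `4k + r = ⌈4c/3⌉ - 2` questions.
-/

namespace TwoPegAB

def pairAnswer (q s : ℕ × ℕ) : ℕ :=
  (if q.1 = s.1 then 1 else 0) + (if q.2 = s.2 then 1 else 0)

def answers (qs : List (ℕ × ℕ)) (s : ℕ × ℕ) : List ℕ :=
  qs.map (pairAnswer · s)

/-- Codes with two pegs and `c` colors, as pairs of natural numbers. -/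
def IsCode (c : ℕ) (s : ℕ × ℕ) : Prop :=
  s.1 < c ∧ s.2 < c ∧ s.1 ≠ s.2

def toCode {c : ℕ} (q : ℕ × ℕ) (hq : IsCode c q) : Fin 2 → Fin c :=
  ![⟨q.1, hq.1⟩, ⟨q.2, hq.2.1⟩]

lemma toCode_injective {c : ℕ} {q : ℕ × ℕ} (hq : IsCode c q) :
    Function.Injective (toCode q hq) := by
  have : (⟨q.1, hq.1⟩ : Fin c) ≠ ⟨q.2, hq.2.1⟩ := fun h => hq.2.2 (Fin.mk.inj h)
  intro i j
  fin_cases i <;> fin_cases j <;> simp [toCode, this, this.symm]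

lemma answer_toCode {c : ℕ} {q : ℕ × ℕ} (hq : IsCode c q) (S : Fin 2 → Fin c) :
    answer (toCode q hq) S = pairAnswer q ((S 0 : ℕ), (S 1 : ℕ)) := by
  rw [answer, Finset.card_filter, Fin.sum_univ_two]
  simp [toCode, pairAnswer, Fin.ext_iff]

lemma isCode_of_injective {c : ℕ} {S : Fin 2 → Fin c} (hS : Function.Injective S) :
    IsCode c ((S 0 : ℕ), (S 1 : ℕ)) :=
  ⟨(S 0).isLt, (S 1).isLt, fun h => zero_ne_one (hS (Fin.ext h))⟩

theorem feasible_pmap_toCode {c : ℕ} {qs : List (ℕ × ℕ)} (hnodup : qs.Nodup)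
    (hcode : ∀ q ∈ qs, IsCode c q)
    (hsep : ∀ s s', IsCode c s → IsCode c s' → answers qs s = answers qs s' → s = s') :
    Feasible (qs.pmap toCode hcode) := by
  refine ⟨hnodup.pmap fun q hq q' hq' h => ?_, ?_, fun S S' hS hS' h => ?_⟩
  · have h0 := congrArg Fin.val (congrFun h 0)
    have h1 := congrArg Fin.val (congrFun h 1)
    simp only [toCode] at h0 h1
    exact Prod.ext h0 h1
  · simp only [List.mem_pmap]
    rintro _ ⟨q, hq, rfl⟩
    exact toCode_injective _
  · simp only [List.map_pmap, answer_toCode, List.pmap_eq_map] at h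
    have := hsep _ _ (isCode_of_injective hS) (isCode_of_injective hS') h
    funext i
    fin_cases i
    · exact Fin.ext (congrArg Prod.fst this)
    · exact Fin.ext (congrArg Prod.snd this)

lemma answers_append_inj {qs qs' : List (ℕ × ℕ)} {s s' : ℕ × ℕ}
    (h : answers (qs ++ qs') s = answers (qs ++ qs') s') :
    answers qs s = answers qs s' ∧ answers qs' s = answers qs' s' := by
  simp only [answers, List.map_append] at h
  exact List.append_inj h (by simp [answers])

def block (g : ℕ) : List (ℕ × ℕ) :=
  [(3*g, 3*g+1), (3*g, 3*g+2), (3*g+1, 3*g), (3*g+2, 3*g)]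

def blocks : ℕ → List (ℕ × ℕ)
  | 0 => []
  | k + 1 => blocks k ++ block k

/-- The questions resolving the colors `3k, …, 3k + r` left over after `k` blocks, for `r < 3`. -/
def tail (k : ℕ) : ℕ → List (ℕ × ℕ)
  | 0 => []
  | 1 => [(3*k, 3*k+1)]
  | _ => [(3*k+1, 3*k+2), (3*k+2, 3*k)]

def questions (k r : ℕ) : List (ℕ × ℕ) :=
  blocks k ++ tail k r

/-- The position of the color `x` in block `g`, where `3` stands for "not in the block". -/
def blockPos (g x : ℕ) : Fin 4 :=
  if x = 3*g then 0 else if x = 3*g+1 then 1 else if x = 3*g+2 then 2 else 3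

def blockPattern (u v : Fin 4) : List ℕ :=
  [(if u = 0 then 1 else 0) + (if v = 1 then 1 else 0),
   (if u = 0 then 1 else 0) + (if v = 2 then 1 else 0),
   (if u = 1 then 1 else 0) + (if v = 0 then 1 else 0),
   (if u = 2 then 1 else 0) + (if v = 0 then 1 else 0)]

lemma blockPattern_injective :
    ∀ u v u' v' : Fin 4, blockPattern u v = blockPattern u' v' → u = u' ∧ v = v' := by
  decide

lemma blockPos_eq_zero {g x : ℕ} : blockPos g x = 0 ↔ 3*g = x := by
  unfold blockPos; split_ifs <;> simp <;> omega

lemma blockPos_eq_one {g x : ℕ} : blockPos g x = 1 ↔ 3*g+1 = x := by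
  unfold blockPos; split_ifs <;> simp <;> omega

lemma blockPos_eq_two {g x : ℕ} : blockPos g x = 2 ↔ 3*g+2 = x := by
  unfold blockPos; split_ifs <;> simp <;> omega

lemma answers_block (g : ℕ) (s : ℕ × ℕ) :
    answers (block g) s = blockPattern (blockPos g s.1) (blockPos g s.2) := by
  simp only [answers, block, blockPattern, pairAnswer, blockPos_eq_zero, blockPos_eq_one,
    blockPos_eq_two, List.map_cons, List.map_nil]

lemma eq_or_outside_of_blockPos_eq {g x x' : ℕ} (h : blockPos g x = blockPos g x') :
    x = x' ∨ (x < 3*g ∨ 3*g+3 ≤ x) ∧ (x' < 3*g ∨ 3*g+3 ≤ x') := by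
  unfold blockPos at h
  split_ifs at h <;> simp at h <;> omega

lemma eq_or_le_of_answers_blocks_eq {k : ℕ} {s s' : ℕ × ℕ}
    (h : answers (blocks k) s = answers (blocks k) s') :
    (s.1 = s'.1 ∨ 3*k ≤ s.1 ∧ 3*k ≤ s'.1) ∧ (s.2 = s'.2 ∨ 3*k ≤ s.2 ∧ 3*k ≤ s'.2) := by
  induction k with
  | zero => simp
  | succ k ih =>
    obtain ⟨hprev, hlast⟩ := answers_append_inj h
    rw [answers_block, answers_block] at hlast
    obtain ⟨h1, h2⟩ := blockPattern_injective _ _ _ _ hlast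
    have := eq_or_outside_of_blockPos_eq h1
    have := eq_or_outside_of_blockPos_eq h2
    have := ih hprev
    omega

lemma eq_of_answers_tail_eq {k r : ℕ} (hr : r < 3) {s s' : ℕ × ℕ}
    (hs : IsCode (3*k+r+1) s) (hs' : IsCode (3*k+r+1) s')
    (h1 : s.1 = s'.1 ∨ 3*k ≤ s.1 ∧ 3*k ≤ s'.1) (h2 : s.2 = s'.2 ∨ 3*k ≤ s.2 ∧ 3*k ≤ s'.2)
    (h : answers (tail k r) s = answers (tail k r) s') : s = s' := by
  obtain ⟨x, y⟩ := s
  obtain ⟨x', y'⟩ := s'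
  simp only [IsCode] at hs hs' h1 h2
  simp only [Prod.mk.injEq]
  interval_cases r <;>
    simp only [answers, tail, pairAnswer, List.map_cons, List.map_nil, List.cons.injEq,
      and_true] at h <;>
    (try split_ifs at h) <;> omega

theorem eq_of_answers_questions_eq {k r : ℕ} (hr : r < 3) {s s' : ℕ × ℕ}
    (hs : IsCode (3*k+r+1) s) (hs' : IsCode (3*k+r+1) s')
    (h : answers (questions k r) s = answers (questions k r) s') : s = s' := by
  obtain ⟨hblocks, htail⟩ := answers_append_inj h
  obtain ⟨h1, h2⟩ := eq_or_le_of_answers_blocks_eq hblocks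
  exact eq_of_answers_tail_eq hr hs hs' h1 h2 htail

lemma bounds_of_mem_block {g : ℕ} {q : ℕ × ℕ} (hq : q ∈ block g) :
    3*g ≤ q.1 ∧ IsCode (3*g+3) q := by
  simp only [block, List.mem_cons, List.not_mem_nil, or_false] at hq
  rcases hq with rfl | rfl | rfl | rfl <;> simp only [IsCode] <;> omega

lemma isCode_of_mem_blocks {k : ℕ} {q : ℕ × ℕ} (hq : q ∈ blocks k) : IsCode (3*k) q := by
  induction k with
  | zero => simp [blocks] at hq
  | succ k ih =>
    rcases List.mem_append.1 hq with hq | hq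
    · have := ih hq; simp only [IsCode] at this ⊢; omega
    · have := bounds_of_mem_block hq; simp only [IsCode] at this ⊢; omega

lemma bounds_of_mem_tail {k r : ℕ} (hr : r < 3) {q : ℕ × ℕ} (hq : q ∈ tail k r) :
    3*k ≤ q.1 ∧ IsCode (3*k+r+1) q := by
  interval_cases r <;> simp [tail] at hq <;> rcases hq with rfl | rfl <;>
    simp only [IsCode] <;> omega

lemma isCode_of_mem_questions {k r : ℕ} (hr : r < 3) {q : ℕ × ℕ} (hq : q ∈ questions k r) :
    IsCode (3*k+r+1) q := by
  rcases List.mem_append.1 hq with hq | hq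
  · have := isCode_of_mem_blocks hq; simp only [IsCode] at this ⊢; omega
  · exact (bounds_of_mem_tail hr hq).2

lemma nodup_blocks (k : ℕ) : (blocks k).Nodup := by
  induction k with
  | zero => exact List.nodup_nil
  | succ k ih =>
    refine List.nodup_append.2 ⟨ih, by simp [block], fun q hq q' hq' => ?_⟩
    have := (isCode_of_mem_blocks hq).1
    have := (bounds_of_mem_block hq').1
    exact fun h => by subst h; omega

lemma nodup_questions {k r : ℕ} (hr : r < 3) : (questions k r).Nodup := by
  refine List.nodup_append.2 ⟨nodup_blocks k, ?_, fun q hq q' hq' => ?_⟩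
  · interval_cases r <;> simp [tail]
  · have := (isCode_of_mem_blocks hq).1
    have := (bounds_of_mem_tail hr hq').1
    exact fun h => by subst h; omega

lemma length_blocks (k : ℕ) : (blocks k).length = 4*k := by
  induction k with
  | zero => rfl
  | succ k ih => simp [blocks, block, ih]; ring

lemma length_questions (k : ℕ) {r : ℕ} (hr : r < 3) : (questions k r).length = 4*k + r := by
  interval_cases r <;> simp [questions, tail, length_blocks]

end TwoPegAB

theorem statement0 (c : ℕ) (hc : 2 ≤ c) :
    ∃ qs : List (Fin 2 → Fin c),
      Feasible qs ∧ qs.length = (4 * c + 2) / 3 - 2 := by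
  obtain ⟨k, r, hr, rfl⟩ : ∃ k r, r < 3 ∧ c = 3*k + r + 1 :=
    ⟨(c - 1) / 3, (c - 1) % 3, Nat.mod_lt _ (by norm_num), by omega⟩
  refine ⟨(TwoPegAB.questions k r).pmap TwoPegAB.toCode
      fun _ => TwoPegAB.isCode_of_mem_questions hr,
    TwoPegAB.feasible_pmap_toCode (TwoPegAB.nodup_questions hr) _
      fun _ _ => TwoPegAB.eq_of_answers_questions_eq hr, ?_⟩
  rw [List.length_pmap, TwoPegAB.length_questions k hr]
  omega
end

section
/- For every number of colors c ≥ 2, every feasible strategy for the Static Black-Peg AB Game with 2 pegs and c colors consists of at least ⌈4c/3⌉ − 2 questions. -/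
/-!
View the questions as edges of a bipartite multigraph between the colours at peg 0 and the colours
at peg 1: the secret `(a, b)` answers with the indicator of the edges at `a` plus the indicator of
the edges at `b`. Two colours missing at the same peg could be exchanged in a secret, so at most
one colour is missing at each peg. Call a question isolated if it is the only one with its colour
at either peg; two isolated questions `Q, Q'` with `Q' 0 ≠ Q 1` and `Q' 1 ≠ Q 0` would make the
secrets `(Q 0, Q' 1)` and `(Q' 0, Q 1)` indistinguishable, so there are at most three isolated
questions, and at most two when a colour is missing at each peg. At each peg a colour is used at
least twice, or once by a question alone at that peg, or not at all; this gives
`2c ≤ |F| + 2 · #missing + #alone`, and adding the two pegs yields `4c ≤ 3|F| + 6`.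
-/

open Finset Function

namespace Finset

theorem two_mul_card_le_card_add_fibres {ι α : Type*} [DecidableEq ι] [Fintype α]
    [DecidableEq α] (s : Finset ι) (f : ι → α) :
    2 * Fintype.card α ≤
      #s + 2 * #{a | ∀ x ∈ s, f x ≠ a} + #{x ∈ s | ∀ y ∈ s, f y = f x → y = x} := by
  set U := {x ∈ s | ∀ y ∈ s, f y = f x → y = x}
  have fibre (a : α) : 2 ≤ #{x ∈ s | f x = a} + 2 * (if ∀ x ∈ s, f x ≠ a then 1 else 0) +
      #{x ∈ U | f x = a} := by
    obtain h | h | h : #{x ∈ s | f x = a} = 0 ∨ #{x ∈ s | f x = a} = 1 ∨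
        2 ≤ #{x ∈ s | f x = a} := by omega
    · rw [card_eq_zero, filter_eq_empty_iff] at h
      rw [if_pos h]
      omega
    · obtain ⟨x, hx⟩ := card_eq_one.mp h
      have hxs : x ∈ {x ∈ s | f x = a} := hx ▸ mem_singleton_self x
      rw [mem_filter] at hxs
      have hxU : x ∈ {x ∈ U | f x = a} := by
        refine mem_filter.mpr ⟨mem_filter.mpr ⟨hxs.1, fun y hy hyx => ?_⟩, hxs.2⟩
        exact mem_singleton.mp (hx ▸ mem_filter.mpr ⟨hy, hyx.trans hxs.2⟩)
      have := card_pos.mpr ⟨x, hxU⟩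
      omega
    · omega
  have := sum_le_sum fun a (_ : a ∈ univ) => fibre a
  rwa [sum_const, card_univ, smul_eq_mul, sum_add_distrib, sum_add_distrib, ← mul_sum, sum_boole,
    ← card_eq_sum_card_fiberwise (fun x _ => mem_univ (f x)),
    ← card_eq_sum_card_fiberwise (fun x _ => mem_univ (f x)), Nat.cast_id, mul_comm] at this

end Finset

namespace ABGame

def Separates {p c : ℕ} (F : Finset (Fin p → Fin c)) : Prop :=
  ∀ S S' : Fin p → Fin c, Injective S → Injective S' →
    (∀ Q ∈ F, answer Q S = answer Q S') → S = S'

theorem _root_.Feasible.separates_toFinset {p c : ℕ} {qs : List (Fin p → Fin c)}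
    (h : Feasible qs) : Separates qs.toFinset :=
  fun S S' hS hS' hF =>
    h.2.2 S S' hS hS' (List.map_congr_left fun Q hQ => hF Q (List.mem_toFinset.mpr hQ))

section

variable {p c : ℕ}

def absentColors (F : Finset (Fin p → Fin c)) (i : Fin p) : Finset (Fin c) :=
  {a | ∀ Q ∈ F, Q i ≠ a}

def uniqueAt (F : Finset (Fin p → Fin c)) (i : Fin p) : Finset (Fin p → Fin c) :=
  {Q ∈ F | ∀ R ∈ F, R i = Q i → R = Q}

theorem uniqueAt_subset {F : Finset (Fin p → Fin c)} {i : Fin p} : uniqueAt F i ⊆ F :=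
  filter_subset _ _

theorem two_mul_le_card_add (F : Finset (Fin p → Fin c)) (i : Fin p) :
    2 * c ≤ #F + 2 * #(absentColors F i) + #(uniqueAt F i) := by
  convert two_mul_card_le_card_add_fibres F (· i)
  · exact (Fintype.card_fin c).symm
  · ext; simp [absentColors]
  · ext; simp [uniqueAt]

end

variable {c : ℕ} {F : Finset (Fin 2 → Fin c)}

theorem answer_fin_two (Q S : Fin 2 → Fin c) :
    answer Q S = (if Q 0 = S 0 then 1 else 0) + (if Q 1 = S 1 then 1 else 0) := by
  rw [answer, card_filter, Fin.sum_univ_two]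

theorem Separates.nonempty (hF : Separates F) (hc : 2 ≤ c) : F.Nonempty := by
  let a : Fin c := ⟨0, by omega⟩
  let b : Fin c := ⟨1, hc⟩
  have hab : a ≠ b := by simp [a, b, Fin.ext_iff]
  rw [nonempty_iff_ne_empty]
  rintro rfl
  have := hF ![a, b] ![b, a] (by simpa using hab) (by simpa using hab.symm) (by simp)
  exact hab (by simpa using congrFun this 0)

theorem Separates.card_absentColors_le_one (hF : Separates F) (hc : 3 ≤ c) (i : Fin 2) :
    #(absentColors F i) ≤ 1 := by
  refine card_le_one.mpr fun a ha a' ha' => ?_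
  simp only [absentColors, mem_filter, mem_univ, true_and] at ha ha'
  obtain ⟨x, -, hx⟩ := exists_mem_notMem_of_card_lt_card
    (s := {a, a'}) (t := univ) (by simpa using (card_le_two).trans_lt (by omega))
  simp only [mem_insert, mem_singleton, not_or] at hx
  -- `S a` and `S a'` differ only at peg `i`, where no question has colour `a` or `a'`
  let S (b : Fin c) : Fin 2 → Fin c := fun j => if j = i then b else x
  have hS (b : Fin c) (hb : b ≠ x) : Injective (S b) := by
    intro j k
    fin_cases i <;> fin_cases j <;> fin_cases k <;> simp [S, hb, hb.symm]
  have hSS' := hF (S a) (S a') (hS a (Ne.symm hx.1)) (hS a' (Ne.symm hx.2)) fun Q hQ => by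
    unfold answer
    congr 1
    refine filter_congr fun j _ => ?_
    by_cases hj : j = i
    · subst hj; simp [S, ha Q hQ, ha' Q hQ]
    · simp [S, hj]
  simpa [S] using congrFun hSS' i

def isolated (F : Finset (Fin 2 → Fin c)) : Finset (Fin 2 → Fin c) :=
  uniqueAt F 0 ∩ uniqueAt F 1

theorem isolated_subset : isolated F ⊆ F :=
  inter_subset_left.trans uniqueAt_subset

theorem apply_eq_iff_of_mem_isolated {Q R : Fin 2 → Fin c} (hQ : Q ∈ isolated F) (hR : R ∈ F)
    (i : Fin 2) : R i = Q i ↔ R = Q := by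
  simp only [isolated, uniqueAt, mem_inter, mem_filter] at hQ
  refine ⟨fun h => ?_, fun h => h ▸ rfl⟩
  fin_cases i
  exacts [hQ.1.2 R hR h, hQ.2.2 R hR h]

theorem card_filter_isolated_apply_le_one (i : Fin 2) (a : Fin c) :
    #{Q ∈ isolated F | Q i = a} ≤ 1 := by
  refine card_le_one.mpr fun Q hQ R hR => ?_
  rw [mem_filter] at hQ hR
  exact (apply_eq_iff_of_mem_isolated hR.1 (isolated_subset hQ.1) i).mp (hQ.2.trans hR.2.symm)

theorem Separates.isolated_linked (hF : Separates F) {Q Q' : Fin 2 → Fin c}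
    (hQ : Q ∈ isolated F) (hQ' : Q' ∈ isolated F) (hne : Q ≠ Q') :
    Q' 0 = Q 1 ∨ Q' 1 = Q 0 := by
  by_contra! h
  -- both secrets score one on `Q` and on `Q'`, and zero on every other question
  have := hF ![Q 0, Q' 1] ![Q' 0, Q 1] (by simpa using h.2.symm) (by simpa using h.1)
    fun R hR => by
      simp [answer_fin_two, apply_eq_iff_of_mem_isolated hQ hR,
        apply_eq_iff_of_mem_isolated hQ' hR, add_comm]
  have h0 : Q' 0 = Q 0 := by simpa using (congrFun this 0).symm
  exact hne ((apply_eq_iff_of_mem_isolated hQ (isolated_subset hQ') 0).mp h0).symm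

theorem Separates.card_isolated_le_three (hF : Separates F) : #(isolated F) ≤ 3 := by
  obtain h | ⟨Q, hQ⟩ := (isolated F).eq_empty_or_nonempty
  · simp [h]
  have hsub : isolated F ⊆
      {Q} ∪ {R ∈ isolated F | R 0 = Q 1} ∪ {R ∈ isolated F | R 1 = Q 0} := by
    intro R hR
    by_cases hRQ : R = Q
    · simp [hRQ]
    · rcases hF.isolated_linked hQ hR (Ne.symm hRQ) with h | h <;> simp [hR, h]
  calc #(isolated F)
      ≤ #({Q} ∪ {R ∈ isolated F | R 0 = Q 1} ∪ {R ∈ isolated F | R 1 = Q 0}) :=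
        card_le_card hsub
    _ ≤ #{Q} + #{R ∈ isolated F | R 0 = Q 1} + #{R ∈ isolated F | R 1 = Q 0} :=
        (card_union_le _ _).trans (Nat.add_le_add_right (card_union_le _ _) _)
    _ ≤ 1 + 1 + 1 := by
        gcongr
        exacts [card_singleton Q |>.le, card_filter_isolated_apply_le_one 0 _,
          card_filter_isolated_apply_le_one 1 _]

theorem Separates.card_isolated_le_two (hF : Separates F) {a b : Fin c}
    (ha : a ∈ absentColors F 0) (hb : b ∈ absentColors F 1) : #(isolated F) ≤ 2 := by
  simp only [absentColors, mem_filter, mem_univ, true_and] at ha hb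
  have hsub : isolated F ⊆ {Q ∈ isolated F | Q 0 = b} ∪ {Q ∈ isolated F | Q 1 = a} := by
    intro Q hQ
    have hQF := isolated_subset hQ
    by_contra! h
    simp only [mem_union, mem_filter, hQ, true_and, not_or] at h
    -- both secrets score one on `Q` and zero on every other question
    have := hF ![Q 0, b] ![a, Q 1] (by simpa using h.1) (by simpa using Ne.symm h.2)
      fun R hR => by simp [answer_fin_two, apply_eq_iff_of_mem_isolated hQ hR, hb R hR, ha R hR]
    exact ha Q hQF (by simpa using congrFun this 0)
  calc #(isolated F)
      ≤ #({Q ∈ isolated F | Q 0 = b} ∪ {Q ∈ isolated F | Q 1 = a}) := card_le_card hsub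
    _ ≤ 1 + 1 := (card_union_le _ _).trans
        (add_le_add (card_filter_isolated_apply_le_one 0 b) (card_filter_isolated_apply_le_one 1 a))

theorem card_uniqueAt_add_card_uniqueAt_le (F : Finset (Fin 2 → Fin c)) :
    #(uniqueAt F 0) + #(uniqueAt F 1) ≤ #F + #(isolated F) := by
  rw [← card_union_add_card_inter]
  exact Nat.add_le_add_right (card_le_card (union_subset uniqueAt_subset uniqueAt_subset)) _

theorem Separates.four_mul_le (hF : Separates F) (hc : 3 ≤ c) : 4 * c ≤ 3 * #F + 6 := by
  have h0 := two_mul_le_card_add F 0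
  have h1 := two_mul_le_card_add F 1
  have hu := card_uniqueAt_add_card_uniqueAt_le F
  have z0 := hF.card_absentColors_le_one hc 0
  have z1 := hF.card_absentColors_le_one hc 1
  have t3 := hF.card_isolated_le_three
  have t2 : 0 < #(absentColors F 0) → 0 < #(absentColors F 1) → #(isolated F) ≤ 2 :=
    fun ha hb => hF.card_isolated_le_two (card_pos.mp ha).choose_spec (card_pos.mp hb).choose_spec
  omega

end ABGame

theorem statement1 (c : ℕ) (hc : 2 ≤ c) (qs : List (Fin 2 → Fin c))
    (hqs : Feasible qs) : (4 * c + 2) / 3 - 2 ≤ qs.length := by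
  have hF := hqs.separates_toFinset
  rw [← List.toFinset_card_of_nodup hqs.1]
  obtain rfl | hc := hc.eq_or_lt
  · have := (hF.nonempty le_rfl).card_pos
    omega
  · have := hF.four_mul_le hc
    omega
end

section
/- For the Static Black-Peg AB Game with 2 pegs and c ≥ 2 colors: in every feasible strategy, for each peg i ∈ {0, 1} there is at most one color of Fin c that does not occur on peg i in any question of the strategy. -/
/-! If two colors `q ≠ q'` were both missing on peg `i`, the two secrets that carry
`q`, resp. `q'`, on peg `i` and the same color `r` on the other peg would receive the same answer
from every question. A suitable `r` is the color some question puts on peg `i`; a question exists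
because the empty strategy cannot tell apart the two secrets `(q, q')` and `(q', q)`. -/

open Function

theorem injective_update_const_fin_two {α : Type*} {a b : α} (i : Fin 2) (hab : a ≠ b) :
    Injective (update (fun _ : Fin 2 => b) i a) := by
  intro x y hxy
  fin_cases i <;> fin_cases x <;> fin_cases y <;> simp_all [update, eq_comm]

theorem answer_update_of_ne {p c : ℕ} {Q S : Fin p → Fin c} {i : Fin p} {a : Fin c}
    (hS : Q i ≠ S i) (ha : Q i ≠ a) : answer Q (update S i a) = answer Q S := by
  unfold answer
  congr 1
  refine Finset.filter_congr fun k _ => ?_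
  by_cases hk : k = i
  · subst hk
    simp [hS, ha]
  · simp [update_of_ne hk]

namespace Feasible

variable {p c : ℕ} {qs : List (Fin p → Fin c)}

theorem ne_nil (hqs : Feasible qs) {S S' : Fin p → Fin c} (hS : Injective S)
    (hS' : Injective S') (hne : S ≠ S') : qs ≠ [] := by
  rintro rfl
  exact hne (hqs.2.2 S S' hS hS' rfl)

theorem exists_mem_apply_eq_or_eq (hqs : Feasible qs) {S : Fin p → Fin c} {i : Fin p}
    {a : Fin c} (hS : Injective S) (hS' : Injective (update S i a)) (ha : a ≠ S i) :
    ∃ Q ∈ qs, Q i = S i ∨ Q i = a := by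
  by_contra! hmiss
  have hsame : qs.map (fun Q => answer Q S) = qs.map (fun Q => answer Q (update S i a)) :=
    List.map_congr_left fun Q hQ => (answer_update_of_ne (hmiss Q hQ).1 (hmiss Q hQ).2).symm
  have hSi := congrFun (hqs.2.2 _ _ hS hS' hsame) i
  rw [update_self] at hSi
  exact ha hSi.symm

end Feasible

theorem statement4_general (c : ℕ) (qs : List (Fin 2 → Fin c))
    (hqs : Feasible qs) (i : Fin 2) :
    ({q : Fin c | ∀ Q ∈ qs, Q i ≠ q}).Subsingleton := by
  intro q hq q' hq'
  by_contra hne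
  obtain ⟨Q, hQ⟩ := qs.exists_mem_of_ne_nil <|
    hqs.ne_nil (injective_update_const_fin_two i hne)
      (injective_update_const_fin_two i (Ne.symm hne))
      fun h => hne (by simpa using congrFun h i)
  have hrq : Q i ≠ q := hq Q hQ
  have hrq' : Q i ≠ q' := hq' Q hQ
  obtain ⟨Q', hQ', hQ'i⟩ := hqs.exists_mem_apply_eq_or_eq (i := i) (a := q')
    (injective_update_const_fin_two i hrq.symm)
    (by rw [update_idem]; exact injective_update_const_fin_two i hrq'.symm)
    (by simpa using Ne.symm hne)
  rw [update_self] at hQ'i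
  exact hQ'i.elim (hq Q' hQ') (hq' Q' hQ')

theorem statement4 (c : ℕ) (hc : 2 ≤ c) (qs : List (Fin 2 → Fin c))
    (hqs : Feasible qs) (i : Fin 2) :
    ({q : Fin c | ∀ Q ∈ qs, Q i ≠ q}).Subsingleton :=
  statement4_general c qs hqs i
end

section
/- For the Static Black-Peg AB Game with 2 pegs and c ≥ 2 colors: a feasible strategy cannot contain two (1,1)-questions that are disjoint (share no color). -/
lemma List.eq_of_countP_eq_one {α : Type*} {l : List α} {p : α → Bool} (hp : l.countP p = 1)
    {a b : α} (ha : a ∈ l) (hb : b ∈ l) (hpa : p a) (hpb : p b) : a = b := by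
  rw [List.countP_eq_length_filter] at hp
  obtain ⟨x, hx⟩ := List.length_eq_one_iff.mp hp
  have ha' : a ∈ [x] := hx ▸ List.mem_filter.mpr ⟨ha, hpa⟩
  have hb' : b ∈ [x] := hx ▸ List.mem_filter.mpr ⟨hb, hpb⟩
  rw [List.mem_singleton] at ha' hb'
  rw [ha', hb']

lemma eq_of_occ_eq_one {p c : ℕ} {qs : List (Fin p → Fin c)} {i : Fin p} {Q R : Fin p → Fin c}
    (hocc : occ qs i (Q i) = 1) (hQ : Q ∈ qs) (hR : R ∈ qs) (h : R i = Q i) : R = Q :=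
  List.eq_of_countP_eq_one hocc hR hQ (by simp [h]) (by simp)

lemma answer_fin_two {c : ℕ} (Q S : Fin 2 → Fin c) :
    answer Q S = (if Q 0 = S 0 then 1 else 0) + (if Q 1 = S 1 then 1 else 0) := by
  rw [answer, Finset.card_filter, Fin.sum_univ_two]

lemma injective_vec_two {α : Type*} {a b : α} (h : a ≠ b) : Function.Injective ![a, b] := by
  intro i j hij
  fin_cases i <;> fin_cases j <;> simp_all [eq_comm]

section SwappedSecrets

variable {c : ℕ} {Q Q' : Fin 2 → Fin c}

lemma answer_swap_left (h0 : Q 0 ≠ Q' 0) (h1 : Q 1 ≠ Q' 1) :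
    answer Q ![Q 0, Q' 1] = answer Q ![Q' 0, Q 1] := by
  simp [answer_fin_two, h0, h1]

lemma answer_swap_right (h0 : Q 0 ≠ Q' 0) (h1 : Q 1 ≠ Q' 1) :
    answer Q' ![Q 0, Q' 1] = answer Q' ![Q' 0, Q 1] := by
  simp [answer_fin_two, Ne.symm h0, Ne.symm h1]

lemma answer_swap_of_avoids {R : Fin 2 → Fin c} (h0 : R 0 ≠ Q 0 ∧ R 0 ≠ Q' 0)
    (h1 : R 1 ≠ Q 1 ∧ R 1 ≠ Q' 1) :
    answer R ![Q 0, Q' 1] = answer R ![Q' 0, Q 1] := by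
  simp [answer_fin_two, h0, h1]

end SwappedSecrets

theorem statement5_general (c : ℕ) (qs : List (Fin 2 → Fin c))
    (hqs : Feasible qs) :
    ¬ ∃ Q Q' : Fin 2 → Fin c, Q ∈ qs ∧ Q' ∈ qs ∧
      (occ qs 0 (Q 0) = 1 ∧ occ qs 1 (Q 1) = 1) ∧
      (occ qs 0 (Q' 0) = 1 ∧ occ qs 1 (Q' 1) = 1) ∧
      (∀ i j : Fin 2, Q i ≠ Q' j) := by
  rintro ⟨Q, Q', hQ, hQ', ⟨hQ0, hQ1⟩, ⟨hQ'0, hQ'1⟩, hdisj⟩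
  have hsame :
      qs.map (fun R => answer R ![Q 0, Q' 1]) = qs.map (fun R => answer R ![Q' 0, Q 1]) := by
    refine List.map_congr_left fun R hR => ?_
    by_cases hRQ : R = Q
    · subst hRQ; exact answer_swap_left (hdisj 0 0) (hdisj 1 1)
    by_cases hRQ' : R = Q'
    · subst hRQ'; exact answer_swap_right (hdisj 0 0) (hdisj 1 1)
    exact answer_swap_of_avoids
      ⟨fun h => hRQ (eq_of_occ_eq_one hQ0 hQ hR h),
        fun h => hRQ' (eq_of_occ_eq_one hQ'0 hQ' hR h)⟩
      ⟨fun h => hRQ (eq_of_occ_eq_one hQ1 hQ hR h),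
        fun h => hRQ' (eq_of_occ_eq_one hQ'1 hQ' hR h)⟩
  have hS := hqs.2.2 _ _ (injective_vec_two (hdisj 0 1)) (injective_vec_two (hdisj 1 0).symm) hsame
  exact hdisj 0 0 (congrFun hS 0)

theorem statement5 (c : ℕ) (hc : 2 ≤ c) (qs : List (Fin 2 → Fin c))
    (hqs : Feasible qs) :
    ¬ ∃ Q Q' : Fin 2 → Fin c, Q ∈ qs ∧ Q' ∈ qs ∧
      (occ qs 0 (Q 0) = 1 ∧ occ qs 1 (Q 1) = 1) ∧
      (occ qs 0 (Q' 0) = 1 ∧ occ qs 1 (Q' 1) = 1) ∧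
      (∀ i j : Fin 2, Q i ≠ Q' j) :=
  statement5_general c qs hqs
end

section
/- For the Static Black-Peg AB Game with 3 pegs and c ≥ 5 colors: in every feasible strategy, for each peg i ∈ {0, 1, 2} there is at most one color of Fin c that does not occur on peg i in any question of the strategy. -/
variable {p c : ℕ}

lemma answer_eq_of_eq_of_ne {Q S S' : Fin p → Fin c} {i : Fin p}
    (hSS' : ∀ j, j ≠ i → S j = S' j) (hS : Q i ≠ S i) (hS' : Q i ≠ S' i) :
    answer Q S = answer Q S' := by
  unfold answer
  congr 1
  refine Finset.filter_congr fun j _ => ?_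
  by_cases hj : j = i
  · subst hj
    simp only [hS, hS']
  · rw [hSS' j hj]

lemma exists_injective_apply_eq_of_lt (hpc : p < c) (i : Fin p) (q q' : Fin c) :
    ∃ S : Fin p → Fin c, Function.Injective S ∧ S i = q ∧ ∀ j, j ≠ i → S j ≠ q' := by
  obtain ⟨e⟩ : Nonempty (Fin p ↪ {x : Fin c // x ≠ q'}) :=
    Function.Embedding.nonempty_of_card_le <| by
      simp only [Fintype.card_fin, ne_eq, Fintype.card_subtype_compl, Fintype.card_unique]; omega
  let S₀ : Fin p → Fin c := fun j => e j
  have hS₀ : Function.Injective S₀ := Subtype.val_injective.comp e.injective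
  refine ⟨Equiv.swap (S₀ i) q ∘ S₀, (Equiv.injective _).comp hS₀, by simp, fun j hj => ?_⟩
  have hji : S₀ j ≠ S₀ i := hS₀.ne hj
  by_cases hjq : S₀ j = q
  · simpa [Function.comp_apply, hjq] using (e i).2
  · simpa [Function.comp_apply, Equiv.swap_apply_of_ne_of_ne hji hjq] using (e j).2

theorem Feasible.missing_colors_subsingleton {qs : List (Fin p → Fin c)} (hqs : Feasible qs)
    (hpc : p < c) (i : Fin p) : ({q : Fin c | ∀ Q ∈ qs, Q i ≠ q}).Subsingleton := by
  intro q hq q' hq'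
  obtain ⟨S, hS, hSi, hSq'⟩ := exists_injective_apply_eq_of_lt hpc i q q'
  set S' := Equiv.swap q q' ∘ S
  have hS'i : S' i = q' := by simp [S', hSi]
  have hSS' : ∀ j, j ≠ i → S j = S' j := fun j hj =>
    (Equiv.swap_apply_of_ne_of_ne (hSi ▸ hS.ne hj) (hSq' j hj)).symm
  have hanswers : qs.map (fun Q => answer Q S) = qs.map (fun Q => answer Q S') :=
    List.map_congr_left fun Q hQ =>
      answer_eq_of_eq_of_ne hSS' (hSi ▸ hq Q hQ) (hS'i ▸ hq' Q hQ)
  have hSeq : S = S' := hqs.2.2 S S' hS ((Equiv.injective _).comp hS) hanswers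
  rw [← hSi, ← hS'i, hSeq]

theorem statement9 (c : ℕ) (hc : 5 ≤ c) (qs : List (Fin 3 → Fin c))
    (hqs : Feasible qs) (i : Fin 3) :
    ({q : Fin c | ∀ Q ∈ qs, Q i ≠ q}).Subsingleton :=
  hqs.missing_colors_subsingleton (by omega) i
end

section
/- For the Static Black-Peg AB Game with 3 pegs and c ≥ 5 colors: if a feasible strategy contains two (1,1,1)-questions, then no other question of the strategy is a (1,1,⋆)-question, a (1,⋆,1)-question, or a (⋆,1,1)-question; equivalently, no question other than these two has two distinct pegs on each of which its color occurs in exactly one question of the strategy. -/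
open Function

section General

variable {p c : ℕ}

def UniqueAt (qs : List (Fin p → Fin c)) (i : Fin p) (X : Fin p → Fin c) : Prop :=
  ∀ R ∈ qs, R i = X i → R = X

lemma uniqueAt_of_occ_eq_one {qs : List (Fin p → Fin c)} {i : Fin p} {X : Fin p → Fin c}
    (hX : X ∈ qs) (h : occ qs i (X i) = 1) : UniqueAt qs i X := by
  intro R hR hRX
  rw [occ, List.countP_eq_length_filter, List.length_eq_one_iff] at h
  obtain ⟨Y, hY⟩ := h
  have eq_of_mem : ∀ T ∈ qs, T i = X i → T = Y := fun T hT hTi => by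
    have : T ∈ qs.filter (fun Q => decide (Q i = X i)) := List.mem_filter.2 ⟨hT, by simpa⟩
    simpa [hY] using this
  exact (eq_of_mem R hR hRX).trans (eq_of_mem X hX rfl).symm

lemma UniqueAt.eq_iff_eq {qs : List (Fin p → Fin c)} {i j : Fin p} {X R : Fin p → Fin c}
    (hi : UniqueAt qs i X) (hj : UniqueAt qs j X) (hR : R ∈ qs) :
    R i = X i ↔ R j = X j :=
  ⟨fun h => hi R hR h ▸ rfl, fun h => hj R hR h ▸ rfl⟩

lemma UniqueAt.ne {qs : List (Fin p → Fin c)} {i : Fin p} {X R : Fin p → Fin c}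
    (hX : UniqueAt qs i X) (hR : R ∈ qs) (hRX : R ≠ X) : R i ≠ X i :=
  fun h => hRX (hX R hR h)

lemma answer_eq_of_perm {Q S S' : Fin p → Fin c} (σ : Equiv.Perm (Fin p))
    (h : ∀ i, Q i = S i ↔ Q (σ i) = S' (σ i)) : answer Q S = answer Q S' :=
  Finset.card_equiv σ (by simpa using h)

lemma Feasible.eq_of_forall_answer_eq {qs : List (Fin p → Fin c)} (hqs : Feasible qs)
    {S S' : Fin p → Fin c} (hS : Injective S) (hS' : Injective S')
    (h : ∀ Q ∈ qs, answer Q S = answer Q S') : S = S' :=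
  hqs.2.2 S S' hS hS' (List.map_congr_left h)

lemma answer_comp_perm (e : Equiv.Perm (Fin p)) (Q S : Fin p → Fin c) :
    answer (Q ∘ e) S = answer Q (S ∘ e.symm) :=
  Finset.card_equiv e (by simp)

lemma Feasible.map_comp_perm {qs : List (Fin p → Fin c)} (hqs : Feasible qs)
    (e : Equiv.Perm (Fin p)) : Feasible (qs.map (· ∘ e)) := by
  obtain ⟨hnd, hinj, hdist⟩ := hqs
  refine ⟨hnd.map e.surjective.injective_comp_right, ?_, fun S S' hS hS' hmap => ?_⟩
  · simp only [List.mem_map, forall_exists_index, and_imp, forall_apply_eq_imp_iff₂]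
    exact fun Q hQ => (hinj Q hQ).comp e.injective
  · have relabel : ∀ T, (qs.map (· ∘ e)).map (answer · T) = qs.map (answer · (T ∘ e.symm)) :=
      fun T => by rw [List.map_map]; exact List.map_congr_left fun Q _ => answer_comp_perm e Q T
    rw [relabel, relabel] at hmap
    have := hdist _ _ (hS.comp e.symm.injective) (hS'.comp e.symm.injective) hmap
    exact e.symm.surjective.injective_comp_right this

lemma UniqueAt.map_comp_perm {qs : List (Fin p → Fin c)} {i : Fin p} {X : Fin p → Fin c}
    (e : Equiv.Perm (Fin p)) (h : UniqueAt qs (e i) X) :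
    UniqueAt (qs.map (· ∘ e)) i (X ∘ e) := by
  simp only [UniqueAt, List.mem_map, forall_exists_index, and_imp, forall_apply_eq_imp_iff₂]
  exact fun R hR hRi => congrArg (· ∘ e) (h R hR hRi)

end General

lemma exists_ne_of_five_le {c : ℕ} (hc : 5 ≤ c) (a b d e : Fin c) :
    ∃ w, w ≠ a ∧ w ≠ b ∧ w ≠ d ∧ w ≠ e := by
  have hcard : ({a, b, d, e} : Finset (Fin c)).card < (Finset.univ : Finset (Fin c)).card := by
    simpa using Finset.card_le_four.trans_lt (by omega : 4 < c)
  obtain ⟨w, -, hw⟩ := Finset.exists_mem_notMem_of_card_lt_card hcard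
  simp only [Finset.mem_insert, Finset.mem_singleton, not_or] at hw
  exact ⟨w, hw⟩

lemma cycle_of_cross {α : Type*} {a₀ a₁ b₀ b₁ c₀ c₁ : α}
    (hab₀ : a₀ ≠ b₀) (hac₀ : a₀ ≠ c₀) (hbc₀ : b₀ ≠ c₀)
    (hab₁ : a₁ ≠ b₁) (hac₁ : a₁ ≠ c₁) (hbc₁ : b₁ ≠ c₁)
    (hab : a₀ = b₁ ∨ b₀ = a₁) (hac : a₀ = c₁ ∨ c₀ = a₁) (hbc : b₀ = c₁ ∨ c₀ = b₁) :
    (c₀ = a₁ ∧ a₀ = b₁ ∧ b₀ = c₁) ∨ (c₀ = b₁ ∧ b₀ = a₁ ∧ a₀ = c₁) := by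
  grind

section ThreePegs

variable {c : ℕ} {qs : List (Fin 3 → Fin c)}

lemma cross_eq_of_uniqueAt (hc : 5 ≤ c) (hqs : Feasible qs) {X Y : Fin 3 → Fin c}
    (hX : X ∈ qs) (hXY : X ≠ Y)
    (hX0 : UniqueAt qs 0 X) (hX1 : UniqueAt qs 1 X)
    (hY0 : UniqueAt qs 0 Y) (hY1 : UniqueAt qs 1 Y) :
    X 0 = Y 1 ∨ Y 0 = X 1 := by
  by_contra! ⟨h₁, h₂⟩
  obtain ⟨w, hw₁, hw₂, hw₃, hw₄⟩ := exists_ne_of_five_le hc (X 0) (Y 1) (Y 0) (X 1)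
  have hS : Injective ![X 0, Y 1, w] := by
    intro i j; fin_cases i <;> fin_cases j <;> simp_all [eq_comm]
  have hS' : Injective ![Y 0, X 1, w] := by
    intro i j; fin_cases i <;> fin_cases j <;> simp_all [eq_comm]
  have := hqs.eq_of_forall_answer_eq hS hS' fun R hR => answer_eq_of_perm (Equiv.swap 0 1)
    fun i => by
      fin_cases i
      · exact hX0.eq_iff_eq hX1 hR
      · exact hY1.eq_iff_eq hY0 hR
      · exact Iff.rfl
  exact hY0.ne hX hXY (congrFun this 0)

lemma false_of_cycle (hqs : Feasible qs) {P Q R : Fin 3 → Fin c}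
    (hQ : Q ∈ qs) (hR : R ∈ qs) (hne : Q ≠ R)
    (hP0 : UniqueAt qs 0 P) (hP1 : UniqueAt qs 1 P)
    (hQ0 : UniqueAt qs 0 Q) (hQ2 : UniqueAt qs 2 Q)
    (hR1 : UniqueAt qs 1 R) (hR2 : UniqueAt qs 2 R)
    (hPQ : P 0 = Q 1) (hQR : Q 0 = R 1) (hRP : R 0 = P 1) : False := by
  -- Against `Q` and `R` with pegs 0 and 1 exchanged, `P`, `R`, `Q` score on pegs 0, 1, 2
  -- and on pegs 1, 2, 0 respectively, and no other question scores at all.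
  have := hqs.eq_of_forall_answer_eq ((hqs.2.1 Q hQ).comp (Equiv.swap 0 1).injective)
    ((hqs.2.1 R hR).comp (Equiv.swap 0 1).injective) fun T hT => answer_eq_of_perm (finRotate 3)
    fun i => by
      fin_cases i
      · show T 0 = Q 1 ↔ T 1 = R 0
        rw [← hPQ, hRP]; exact hP0.eq_iff_eq hP1 hT
      · show T 1 = Q 0 ↔ T 2 = R 2
        rw [hQR]; exact hR1.eq_iff_eq hR2 hT
      · show T 2 = Q 2 ↔ T 0 = R 1
        rw [← hQR]; exact hQ2.eq_iff_eq hQ0 hT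
  exact hne ((Equiv.swap 0 1).surjective.injective_comp_right this)

lemma false_of_uniqueAt_zero_one (hc : 5 ≤ c) (hqs : Feasible qs) {A B C : Fin 3 → Fin c}
    (hA : A ∈ qs) (hB : B ∈ qs) (hAB : A ≠ B) (hAC : A ≠ C) (hBC : B ≠ C)
    (uA : ∀ i, UniqueAt qs i A) (uB : ∀ i, UniqueAt qs i B)
    (uC0 : UniqueAt qs 0 C) (uC1 : UniqueAt qs 1 C) : False := by
  rcases cycle_of_cross ((uB 0).ne hA hAB) (uC0.ne hA hAC) (uC0.ne hB hBC)
      ((uB 1).ne hA hAB) (uC1.ne hA hAC) (uC1.ne hB hBC)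
      (cross_eq_of_uniqueAt hc hqs hA hAB (uA 0) (uA 1) (uB 0) (uB 1))
      (cross_eq_of_uniqueAt hc hqs hA hAC (uA 0) (uA 1) uC0 uC1)
      (cross_eq_of_uniqueAt hc hqs hB hBC (uB 0) (uB 1) uC0 uC1) with ⟨hCA, hAB', hBC'⟩ | ⟨hCB, hBA, hAC'⟩
  · exact false_of_cycle hqs hA hB hAB uC0 uC1 (uA 0) (uA 2) (uB 1) (uB 2) hCA hAB' hBC'
  · exact false_of_cycle hqs hB hA hAB.symm uC0 uC1 (uB 0) (uB 2) (uA 1) (uA 2) hCB hBA hAC'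

lemma false_of_uniqueAt_perm (hc : 5 ≤ c) (hqs : Feasible qs) (e : Equiv.Perm (Fin 3))
    {A B C : Fin 3 → Fin c} (hA : A ∈ qs) (hB : B ∈ qs)
    (hAB : A ≠ B) (hAC : A ≠ C) (hBC : B ≠ C)
    (uA : ∀ i, UniqueAt qs i A) (uB : ∀ i, UniqueAt qs i B)
    (uC0 : UniqueAt qs (e 0) C) (uC1 : UniqueAt qs (e 1) C) : False := by
  have comp_ne {X Y : Fin 3 → Fin c} (h : X ≠ Y) : X ∘ e ≠ Y ∘ e :=
    e.surjective.injective_comp_right.ne h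
  exact false_of_uniqueAt_zero_one hc (hqs.map_comp_perm e) (List.mem_map_of_mem hA)
    (List.mem_map_of_mem hB) (comp_ne hAB) (comp_ne hAC) (comp_ne hBC)
    (fun i => (uA (e i)).map_comp_perm e) (fun i => (uB (e i)).map_comp_perm e)
    (uC0.map_comp_perm e) (uC1.map_comp_perm e)

end ThreePegs

theorem statement13 (c : ℕ) (hc : 5 ≤ c) (qs : List (Fin 3 → Fin c))
    (hqs : Feasible qs) (Q₁ Q₂ : Fin 3 → Fin c)
    (h₁ : Q₁ ∈ qs) (h₂ : Q₂ ∈ qs) (hne : Q₁ ≠ Q₂)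
    (o₁ : ∀ i : Fin 3, occ qs i (Q₁ i) = 1)
    (o₂ : ∀ i : Fin 3, occ qs i (Q₂ i) = 1) :
    ∀ Q ∈ qs, Q ≠ Q₁ → Q ≠ Q₂ →
      ¬ ((occ qs 0 (Q 0) = 1 ∧ occ qs 1 (Q 1) = 1) ∨
         (occ qs 0 (Q 0) = 1 ∧ occ qs 2 (Q 2) = 1) ∨
         (occ qs 1 (Q 1) = 1 ∧ occ qs 2 (Q 2) = 1)) := by
  intro Q hQ hQ₁ hQ₂ hpegs
  have key (e : Equiv.Perm (Fin 3)) (h0 : occ qs (e 0) (Q (e 0)) = 1)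
      (h1 : occ qs (e 1) (Q (e 1)) = 1) : False :=
    false_of_uniqueAt_perm hc hqs e h₁ h₂ hne hQ₁.symm hQ₂.symm
      (fun i => uniqueAt_of_occ_eq_one h₁ (o₁ i)) (fun i => uniqueAt_of_occ_eq_one h₂ (o₂ i))
      (uniqueAt_of_occ_eq_one hQ h0) (uniqueAt_of_occ_eq_one hQ h1)
  rcases hpegs with ⟨h0, h1⟩ | ⟨h0, h2⟩ | ⟨h1, h2⟩
  · exact key 1 h0 h1
  · exact key (Equiv.swap 1 2) h0 h2
  · exact key (finRotate 3) h1 h2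
end

section
/- For the Static Black-Peg AB Game with 3 pegs and c ≥ 5 colors: a feasible strategy contains at most two (1,1,1)-questions. -/
/-!
Three distinct `(1,1,1)`-questions of a feasible strategy form a `3 × 3` array whose rows are
injective codes and whose columns are injective too, because a `(1,1,1)`-question shares its
color on a peg with no other question. Such an array has at least two rainbow transversals.
Read as secrets, each of them gets answer `1` from the three rows and `0` from every other
question, so the strategy does not separate them.
-/

open Finset Function Equiv

lemma Equiv.Perm.eq_of_apply_eq_of_apply_eq_fin_three :
    ∀ (σ τ : Perm (Fin 3)) (i j : Fin 3), i ≠ j → σ i = τ i → σ j = τ j → σ = τ := by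
  decide

lemma fin_three_eq_of_ne_of_ne :
    ∀ a b x y : Fin 3, x ≠ y → a ≠ x → a ≠ y → b ≠ x → b ≠ y → a = b := by
  decide

lemma List.Nodup.eq_of_countP_le_one {α : Type*} {l : List α} (hl : l.Nodup) {P : α → Prop}
    [DecidablePred P] (h : l.countP (P ·) ≤ 1) {a b : α} (ha : a ∈ l) (hb : b ∈ l) (hPa : P a)
    (hPb : P b) :
    a = b := by
  classical
  rw [← hl.card_eq_countP] at h
  exact Finset.card_le_one.1 h a (by simp [ha, hPa]) b (by simp [hb, hPb])

section Transversal

variable {ι α : Type*}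

def transversal (M : ι → ι → α) (σ : Perm ι) (i : ι) : α := M (σ i) i

lemma transversal_injective (M : ι → ι → α) (hcol : ∀ i, Injective fun k => M k i) :
    Injective (transversal M) := fun _ _ h =>
  Equiv.ext fun i => hcol i (congrFun h i)

def RepeatsColor (M : ι → ι → α) (σ : Perm ι) (q : α) : Prop :=
  ∃ i j, i ≠ j ∧ M (σ i) i = q ∧ M (σ j) j = q

lemma exists_repeatsColor_of_not_injective {M : ι → ι → α} {σ : Perm ι}
    (h : ¬ Injective (transversal M σ)) : ∃ q, RepeatsColor M σ q := by
  obtain ⟨i, j, hij, hne⟩ := Function.not_injective_iff.1 h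
  exact ⟨_, i, j, hne, rfl, hij.symm⟩

end Transversal

section ThreeByThree

variable {α : Type*} {M : Fin 3 → Fin 3 → α}

lemma RepeatsColor.apply_eq (hrow : ∀ k, Injective (M k))
    (hcol : ∀ i, Injective fun k => M k i) {σ : Perm (Fin 3)} {q : α}
    (hσ : RepeatsColor M σ q) {r x : Fin 3} (hr : M r x = q) : σ x = r := by
  obtain ⟨i, j, hij, hi, hj⟩ := hσ
  by_cases hxi : x = i
  · subst hxi; exact hcol x (hi.trans hr.symm)
  by_cases hxj : x = j
  · subst hxj; exact hcol x (hj.trans hr.symm)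
  have hri : σ.symm r ≠ i := by
    rintro rfl; exact hxi (hrow r (hr.trans (by simpa using hi.symm)))
  have hrj : σ.symm r ≠ j := by
    rintro rfl; exact hxj (hrow r (hr.trans (by simpa using hj.symm)))
  rw [← fin_three_eq_of_ne_of_ne _ _ i j hij hri hrj hxi hxj, σ.apply_symm_apply]

lemma RepeatsColor.eq (hrow : ∀ k, Injective (M k)) (hcol : ∀ i, Injective fun k => M k i)
    {σ τ : Perm (Fin 3)} {q : α} (hσ : RepeatsColor M σ q) (hτ : RepeatsColor M τ q) :
    σ = τ := by
  obtain ⟨i, j, hij, hi, hj⟩ := hτ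
  exact Perm.eq_of_apply_eq_of_apply_eq_fin_three σ τ i j hij
    (hσ.apply_eq hrow hcol hi) (hσ.apply_eq hrow hcol hj)

variable [DecidableEq α]

def colorClass (M : Fin 3 → Fin 3 → α) (q : α) : Finset (Fin 3 × Fin 3) :=
  {x | M x.1 x.2 = q}

lemma RepeatsColor.two_le_card_colorClass {σ : Perm (Fin 3)} {q : α}
    (hσ : RepeatsColor M σ q) : 2 ≤ #(colorClass M q) := by
  obtain ⟨i, j, hij, hi, hj⟩ := hσ
  exact Finset.one_lt_card.2
    ⟨(σ i, i), by simp [colorClass, hi], (σ j, j), by simp [colorClass, hj], by simp [hij]⟩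

variable (M) in
lemma card_colors_with_two_cells_le :
    #{q ∈ univ.image (fun x : Fin 3 × Fin 3 => M x.1 x.2) | 2 ≤ #(colorClass M q)} ≤ 4 := by
  set colors := univ.image fun x : Fin 3 × Fin 3 => M x.1 x.2
  have h : 2 * #{q ∈ colors | 2 ≤ #(colorClass M q)} ≤ 9 :=
    calc 2 * #{q ∈ colors | 2 ≤ #(colorClass M q)}
        ≤ ∑ q ∈ colors with 2 ≤ #(colorClass M q), #(colorClass M q) := by
          rw [mul_comm, ← smul_eq_mul]
          exact card_nsmul_le_sum _ _ _ fun q hq => (mem_filter.1 hq).2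
      _ ≤ ∑ q ∈ colors, #(colorClass M q) := sum_le_sum_of_subset (filter_subset _ _)
      _ = 9 := (card_eq_sum_card_image _ univ).symm
  omega

/-- Each color class is a partial transversal, so a non-rainbow permutation is pinned down by
a color it repeats; and there are at most four colors occurring twice among nine cells. -/
theorem two_le_card_injective_transversal (hrow : ∀ k, Injective (M k))
    (hcol : ∀ i, Injective fun k => M k i) :
    2 ≤ #{σ : Perm (Fin 3) | Injective (transversal M σ)} := by
  have hbad : #{σ : Perm (Fin 3) | ¬ Injective (transversal M σ)} ≤ 4 := by
    refine (card_le_card_of_forall_subsingleton (RepeatsColor M) (fun σ hσ => ?_)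
      (fun q _ σ hσ τ hτ => hσ.2.eq hrow hcol hτ.2)).trans (card_colors_with_two_cells_le M)
    obtain ⟨q, hq⟩ := exists_repeatsColor_of_not_injective (mem_filter.1 hσ).2
    refine ⟨q, mem_filter.2 ⟨?_, hq.two_le_card_colorClass⟩, hq⟩
    obtain ⟨i, -, -, hi, -⟩ := hq
    exact mem_image.2 ⟨(σ i, i), mem_univ _, hi⟩
  have htotal := card_filter_add_card_filter_not
    (s := (univ : Finset (Perm (Fin 3)))) fun σ => Injective (transversal M σ)
  simp only [card_univ, Fintype.card_perm, Fintype.card_fin, Nat.factorial] at htotal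
  omega

end ThreeByThree

def IsOneOneOne {p c : ℕ} (qs : List (Fin p → Fin c)) (Q : Fin p → Fin c) : Prop :=
  ∀ i, occ qs i (Q i) = 1

lemma apply_ne_of_occ_eq_one {p c : ℕ} {qs : List (Fin p → Fin c)} (hnd : qs.Nodup)
    {Q R : Fin p → Fin c} (hQ : Q ∈ qs) (hR : R ∈ qs) (hQR : Q ≠ R) {i : Fin p}
    (hocc : occ qs i (R i) = 1) : Q i ≠ R i :=
  fun h => hQR (hnd.eq_of_countP_le_one hocc.le hQ hR h rfl)

lemma answer_eq_zero_iff {p c : ℕ} {Q S : Fin p → Fin c} : answer Q S = 0 ↔ ∀ i, Q i ≠ S i := by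
  simp [answer, filter_eq_empty_iff]

lemma answer_transversal_row {p c : ℕ} {M : Fin p → Fin p → Fin c}
    (hcol : ∀ i, Injective fun k => M k i) (σ : Perm (Fin p)) (k : Fin p) :
    answer (M k) (transversal M σ) = 1 := by
  rw [answer, card_eq_one]
  refine ⟨σ.symm k, Finset.ext fun i => ?_⟩
  rw [mem_filter, mem_singleton, transversal, (hcol i).eq_iff, Equiv.eq_symm_apply, eq_comm]
  exact and_iff_right (mem_univ i)

lemma Feasible.not_injective_of_isOneOneOne {c : ℕ} {qs : List (Fin 3 → Fin c)}
    (hqs : Feasible qs) (M : Fin 3 → Fin 3 → Fin c) (hmem : ∀ k, M k ∈ qs)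
    (hM : ∀ k, IsOneOneOne qs (M k)) : ¬ Injective M := by
  intro hinj
  obtain ⟨hnd, hqinj, hsep⟩ := hqs
  have hdisj : ∀ Q ∈ qs, ∀ k, Q ≠ M k → ∀ i, Q i ≠ M k i := fun Q hQ k hQk i =>
    apply_ne_of_occ_eq_one hnd hQ (hmem k) hQk (hM k i)
  have hrow : ∀ k, Injective (M k) := fun k => hqinj _ (hmem k)
  have hcol : ∀ i, Injective fun k => M k i := fun i a b h =>
    by_contra fun hab => hdisj _ (hmem a) b (hinj.ne hab) i h
  have hanswer :
      ∀ Q ∈ qs, ∀ σ, answer Q (transversal M σ) = if Q ∈ Set.range M then 1 else 0 := by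
    intro Q hQ σ
    split_ifs with hQM
    · obtain ⟨k, rfl⟩ := hQM
      exact answer_transversal_row hcol σ k
    · exact answer_eq_zero_iff.2 fun i => hdisj Q hQ (σ i) (fun h => hQM ⟨_, h.symm⟩) i
  obtain ⟨σ, hσ, τ, hτ, hστ⟩ := one_lt_card.1 (two_le_card_injective_transversal hrow hcol)
  refine hστ (transversal_injective M hcol (hsep _ _ (mem_filter.1 hσ).2 (mem_filter.1 hτ).2 ?_))
  exact List.map_congr_left fun Q hQ => (hanswer Q hQ σ).trans (hanswer Q hQ τ).symm

theorem statement14_general (c : ℕ) (qs : List (Fin 3 → Fin c))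
    (hqs : Feasible qs) :
    qs.countP (fun Q => decide (∀ i : Fin 3, occ qs i (Q i) = 1)) ≤ 2 := by
  rw [← hqs.1.card_eq_countP]
  by_contra! h
  obtain ⟨e⟩ :
      Nonempty (Fin 3 ↪ {Q // Q ∈ qs.toFinset.filter fun Q => ∀ i, occ qs i (Q i) = 1}) :=
    Function.Embedding.nonempty_of_card_le (by rw [Fintype.card_fin, Fintype.card_coe]; exact h)
  refine hqs.not_injective_of_isOneOneOne (fun k => (e k).1) (fun k => ?_) (fun k => ?_)
    (Subtype.val_injective.comp e.injective)
  · simpa using (mem_filter.1 (e k).2).1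
  · exact (mem_filter.1 (e k).2).2

theorem statement14 (c : ℕ) (hc : 5 ≤ c) (qs : List (Fin 3 → Fin c))
    (hqs : Feasible qs) :
    qs.countP (fun Q => decide (∀ i : Fin 3, occ qs i (Q i) = 1)) ≤ 2 :=
  statement14_general c qs hqs
end

section
/- For the Static Black-Peg AB Game with 3 pegs and c ≥ 5 colors: if a feasible strategy is such that for each of the three pegs there is a color missing on that peg, then the strategy contains in total at most three questions that are (≥2,1,1)-questions, (1,≥2,1)-questions, or (1,1,≥2)-questions. -/
/-!
A counted question `Q` with free peg `i` is the only question showing its colour on each of the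
other two pegs; call it the owner of these colours, and let `none` own the colours missing on each
peg. Two secrets built from owned colours that give every owner the same number of pegs, but in
different places, receive the same answers, so by feasibility one of them repeats a colour. Such
swaps of two or three owners force many coincidences between colours on different pegs, while on
a single peg distinct owners have distinct colours. Among four counted questions either three share
a free peg, or the free pegs are distributed as 2 + 2 or 2 + 1 + 1, and in each case the forced
coincidences are inconsistent.
-/

namespace StaticBlackPeg

open Function

section General

variable {p c : ℕ}

theorem answer_eq_of_perm {Q S S' : Fin p → Fin c} (σ : Equiv.Perm (Fin p))
    (h : ∀ t, Q t = S t ↔ Q (σ t) = S' (σ t)) : answer Q S = answer Q S' :=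
  Finset.card_equiv σ fun t => by simp [h t]

theorem _root_.Feasible.eq_of_perm {qs : List (Fin p → Fin c)} (hF : Feasible qs)
    {S S' : Fin p → Fin c} (hS : Injective S) (hS' : Injective S') (σ : Equiv.Perm (Fin p))
    (h : ∀ R ∈ qs, ∀ t, R t = S t ↔ R (σ t) = S' (σ t)) : S = S' :=
  hF.2.2 S S' hS hS' (List.map_congr_left fun R hR => answer_eq_of_perm σ (h R hR))

/-- Colours are named by their owners: at peg `t`, `none` names the missing colour `m t` and
`some Q` the colour `Q t`. -/
def color (m : Fin p → Fin c) (t : Fin p) : Option (Fin p → Fin c) → Fin c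
  | none => m t
  | some Q => Q t

/-- A secret with colour `color m t o` on peg `t` scores there for the question named by `o` and
for no other. -/
def Owns (qs : List (Fin p → Fin c)) (m : Fin p → Fin c) (t : Fin p)
    (o : Option (Fin p → Fin c)) : Prop :=
  ∀ R, R ∈ qs ∧ R t = color m t o ↔ o = some R

variable {qs : List (Fin p → Fin c)} {m : Fin p → Fin c} {t : Fin p}

theorem owns_none (hm : ∀ R ∈ qs, R t ≠ m t) : Owns qs m t none := fun R => by
  simpa [color] using hm R

theorem owns_some_of_occ_eq_one {Q : Fin p → Fin c} (hQ : Q ∈ qs) (h : occ qs t (Q t) = 1) :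
    Owns qs m t (some Q) := by
  intro R
  rw [occ, List.countP_eq_length_filter, List.length_eq_one_iff] at h
  obtain ⟨a, ha⟩ := h
  have key : ∀ X ∈ qs, X t = Q t → X = a := fun X hX hXt => by
    have : X ∈ qs.filter fun Y => decide (Y t = Q t) := List.mem_filter.2 ⟨hX, by simpa using hXt⟩
    simpa [ha] using this
  constructor
  · rintro ⟨hR, hRt⟩
    simp [(key R hR hRt).trans (key Q hQ rfl).symm]
  · rintro ⟨⟩
    exact ⟨hQ, rfl⟩

theorem Owns.iff {o : Option (Fin p → Fin c)} (h : Owns qs m t o) {R : Fin p → Fin c}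
    (hR : R ∈ qs) : R t = color m t o ↔ o = some R :=
  (and_iff_right hR).symm.trans (h R)

theorem Owns.eq_of_color_eq {o o' : Option (Fin p → Fin c)} (h : Owns qs m t o)
    (h' : Owns qs m t o') (he : color m t o = color m t o') : o = o' := by
  cases o' with
  | some R => exact (h R).1 ⟨((h' R).2 rfl).1, he ▸ ((h' R).2 rfl).2⟩
  | none => cases o with
    | none => rfl
    | some R => exact ((h' R).1 ⟨((h R).2 rfl).1, he ▸ ((h R).2 rfl).2⟩).symm

theorem _root_.List.exists_injective_fin_of_lt_countP {α : Type*} {l : List α} (hl : l.Nodup)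
    {P : α → Bool} {n : ℕ} (h : n < l.countP P) :
    ∃ f : Fin (n + 1) → α, Injective f ∧ ∀ a, f a ∈ l ∧ P (f a) := by
  rw [List.countP_eq_length_filter] at h
  refine ⟨fun a => (l.filter P).get (Fin.castLE h a),
    (List.nodup_iff_injective_get.1 (hl.filter P)).comp (Fin.castLE_injective h),
    fun a => List.mem_filter.1 (List.get_mem _ _)⟩

end General

section ThreePegs

variable {c : ℕ} {qs : List (Fin 3 → Fin c)} {m : Fin 3 → Fin c}

theorem Fin3.eq_or_eq_or_eq {i j k : Fin 3} (hij : i ≠ j) (hik : i ≠ k) (hjk : j ≠ k)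
    (t : Fin 3) : t = i ∨ t = j ∨ t = k := by
  revert i j k t; decide

theorem Fin3.forall_of_ne {i j k : Fin 3} (hij : i ≠ j) (hik : i ≠ k) (hjk : j ≠ k)
    {P : Fin 3 → Prop} (hi : P i) (hj : P j) (hk : P k) (t : Fin 3) : P t := by
  rcases Fin3.eq_or_eq_or_eq hij hik hjk t with rfl | rfl | rfl <;> assumption

theorem Fin3.exists_ne_ne (i j : Fin 3) : ∃ k, i ≠ k ∧ j ≠ k := by
  revert i j; decide

theorem Fin3.exists_pairwise_ne (i : Fin 3) : ∃ j k : Fin 3, i ≠ j ∧ i ≠ k ∧ j ≠ k := by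
  revert i; decide

theorem exists_injective_of_ne {i j k : Fin 3} (hij : i ≠ j) (hik : i ≠ k) (hjk : j ≠ k)
    {a b d : Fin c} (hab : a ≠ b) (had : a ≠ d) (hbd : b ≠ d) :
    ∃ S : Fin 3 → Fin c, Injective S ∧ S i = a ∧ S j = b ∧ S k = d := by
  refine ⟨fun t => if t = i then a else if t = j then b else d, ?_, by simp, by simp [hij.symm],
    by simp [hik.symm, hjk.symm]⟩
  intro s t hst
  rcases Fin3.eq_or_eq_or_eq hij hik hjk s with rfl | rfl | rfl <;>
    rcases Fin3.eq_or_eq_or_eq hij hik hjk t with rfl | rfl | rfl <;>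
    simp_all [eq_comm]

theorem exists_ne_of_five_le (hc : 5 ≤ c) (a b d e : Fin c) :
    ∃ x, x ≠ a ∧ x ≠ b ∧ x ≠ d ∧ x ≠ e := by
  obtain ⟨x, -, hx⟩ := Finset.exists_mem_notMem_of_card_lt_card (t := Finset.univ)
    (s := {a, b, d, e}) (Finset.card_le_four.trans_lt (by simp; omega))
  simp only [Finset.mem_insert, Finset.mem_singleton, not_or] at hx
  exact ⟨x, hx⟩

/-- The secrets `(x, o, o')` and `(x, o', o)` on pegs `(i, j, k)`, with `x` a fresh colour, get the
same answers, so one of them repeats a colour. -/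
theorem color_transpose (hc : 5 ≤ c) (hF : Feasible qs) {j k : Fin 3} (hjk : j ≠ k)
    {o o' : Option (Fin 3 → Fin c)} (hoj : Owns qs m j o) (hok : Owns qs m k o)
    (ho'j : Owns qs m j o') (ho'k : Owns qs m k o') (hoo' : o ≠ o') :
    color m j o = color m k o' ∨ color m j o' = color m k o := by
  by_contra! h
  obtain ⟨i, hij, hik⟩ := Fin3.exists_ne_ne j k
  obtain ⟨x, hx⟩ := exists_ne_of_five_le hc (color m j o) (color m k o') (color m j o')
    (color m k o)
  obtain ⟨S, hS, hSi, hSj, hSk⟩ := exists_injective_of_ne hij.symm hik.symm hjk hx.1 hx.2.1 h.1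
  obtain ⟨S', hS', hS'i, hS'j, hS'k⟩ :=
    exists_injective_of_ne hij.symm hik.symm hjk hx.2.2.1 hx.2.2.2 h.2
  refine hoo' (hoj.eq_of_color_eq ho'j ?_)
  rw [← hSj, ← hS'j, hF.eq_of_perm hS hS' (Equiv.swap j k) fun R hR =>
    Fin3.forall_of_ne hij.symm hik.symm hjk ?_ ?_ ?_]
  · rw [Equiv.swap_apply_of_ne_of_ne hij.symm hik.symm, hSi, hS'i]
  · rw [Equiv.swap_apply_left, hSj, hS'k, hoj.iff hR, hok.iff hR]
  · rw [Equiv.swap_apply_right, hSk, hS'j, ho'k.iff hR, ho'j.iff hR]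

/-- The secrets `(o₁, o₂, o₃)` and `(o₃, o₁, o₂)` on pegs `(u, w, v)` get the same answers, so one
of them repeats a colour. -/
theorem color_rotate (hF : Feasible qs) {u w v : Fin 3} (huw : u ≠ w) (huv : u ≠ v)
    (hwv : w ≠ v) {o₁ o₂ o₃ : Option (Fin 3 → Fin c)}
    (h₁u : Owns qs m u o₁) (h₁w : Owns qs m w o₁) (h₂w : Owns qs m w o₂)
    (h₂v : Owns qs m v o₂) (h₃v : Owns qs m v o₃) (h₃u : Owns qs m u o₃) (h₁₃ : o₁ ≠ o₃) :
    color m u o₁ = color m w o₂ ∨ color m u o₁ = color m v o₃ ∨ color m w o₂ = color m v o₃ ∨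
      color m u o₃ = color m w o₁ ∨ color m u o₃ = color m v o₂ ∨
      color m w o₁ = color m v o₂ := by
  by_contra! h
  obtain ⟨S, hS, hSu, hSw, hSv⟩ := exists_injective_of_ne huw huv hwv h.1 h.2.1 h.2.2.1
  obtain ⟨S', hS', hS'u, hS'w, hS'v⟩ :=
    exists_injective_of_ne huw huv hwv h.2.2.2.1 h.2.2.2.2.1 h.2.2.2.2.2
  refine h₁₃ (h₁u.eq_of_color_eq h₃u ?_)
  rw [← hSu, ← hS'u, hF.eq_of_perm hS hS' (Equiv.swap u w * Equiv.swap w v) fun R hR =>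
    Fin3.forall_of_ne huw huv hwv ?_ ?_ ?_]
  · rw [Equiv.Perm.mul_apply, Equiv.swap_apply_of_ne_of_ne huw huv, Equiv.swap_apply_left, hSu,
      hS'w, h₁u.iff hR, h₁w.iff hR]
  · rw [Equiv.Perm.mul_apply, Equiv.swap_apply_left,
      Equiv.swap_apply_of_ne_of_ne huv.symm hwv.symm, hSw, hS'v, h₂w.iff hR, h₂v.iff hR]
  · rw [Equiv.Perm.mul_apply, Equiv.swap_apply_right, Equiv.swap_apply_right, hSv, hS'u,
      h₃v.iff hR, h₃u.iff hR]

/-- A colour has at most one owner on each peg, so the three coincidences given by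
`color_transpose` must form a directed triangle. -/
theorem color_cycle (hc : 5 ≤ c) (hF : Feasible qs) {j k : Fin 3} (hjk : j ≠ k)
    {a b d : Option (Fin 3 → Fin c)} (haj : Owns qs m j a) (hak : Owns qs m k a)
    (hbj : Owns qs m j b) (hbk : Owns qs m k b) (hdj : Owns qs m j d) (hdk : Owns qs m k d)
    (hab : a ≠ b) (had : a ≠ d) (hbd : b ≠ d) :
    (color m j a = color m k b ∧ color m j b = color m k d ∧ color m j d = color m k a) ∨
      (color m j a = color m k d ∧ color m j d = color m k b ∧ color m j b = color m k a) := by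
  have := color_transpose hc hF hjk haj hak hbj hbk hab
  have := color_transpose hc hF hjk hbj hbk hdj hdk hbd
  have := color_transpose hc hF hjk hdj hdk haj hak had.symm
  grind [Owns.eq_of_color_eq]

/-- The questions counted in the theorem: in the paper's terms `Q` is a (≥2,1,1)-, (1,≥2,1)- or
(1,1,≥2)-question with `i` the peg carrying `≥2`, except that this count is not restricted. -/
def UniqueOffPeg (qs : List (Fin 3 → Fin c)) (i : Fin 3) (Q : Fin 3 → Fin c) : Prop :=
  Q ∈ qs ∧ ∀ t, t ≠ i → occ qs t (Q t) = 1

theorem UniqueOffPeg.owns {i t : Fin 3} {Q : Fin 3 → Fin c} (h : UniqueOffPeg qs i Q)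
    (ht : t ≠ i) : Owns qs m t (some Q) :=
  owns_some_of_occ_eq_one h.1 (h.2 t ht)

theorem exists_uniqueOffPeg {Q : Fin 3 → Fin c} (hQ : Q ∈ qs)
    (h : (occ qs 1 (Q 1) = 1 ∧ occ qs 2 (Q 2) = 1) ∨ (occ qs 0 (Q 0) = 1 ∧ occ qs 2 (Q 2) = 1) ∨
      (occ qs 0 (Q 0) = 1 ∧ occ qs 1 (Q 1) = 1)) :
    ∃ i, UniqueOffPeg qs i Q := by
  rcases h with h | h | h
  · exact ⟨0, hQ, fun t ht => by fin_cases t <;> simp_all⟩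
  · exact ⟨1, hQ, fun t ht => by fin_cases t <;> simp_all⟩
  · exact ⟨2, hQ, fun t ht => by fin_cases t <;> simp_all⟩

theorem false_of_three_uniqueOffPeg (hc : 5 ≤ c) (hF : Feasible qs)
    (hm : ∀ t, Owns qs m t none) {i : Fin 3} {Q₁ Q₂ Q₃ : Fin 3 → Fin c}
    (hQ₁ : UniqueOffPeg qs i Q₁) (hQ₂ : UniqueOffPeg qs i Q₂) (hQ₃ : UniqueOffPeg qs i Q₃)
    (h₁₂ : Q₁ ≠ Q₂) (h₁₃ : Q₁ ≠ Q₃) (h₂₃ : Q₂ ≠ Q₃) : False := by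
  obtain ⟨j, k, hij, hik, hjk⟩ := Fin3.exists_pairwise_ne i
  have hQ₁j := hQ₁.owns (m := m) hij.symm
  have hQ₁k := hQ₁.owns (m := m) hik.symm
  have hQ₂j := hQ₂.owns (m := m) hij.symm
  have hQ₂k := hQ₂.owns (m := m) hik.symm
  have hQ₃j := hQ₃.owns (m := m) hij.symm
  have hQ₃k := hQ₃.owns (m := m) hik.symm
  have := color_cycle hc hF hjk (hm j) (hm k) hQ₁j hQ₁k hQ₂j hQ₂k (by simp) (by simp)
    (by simpa using h₁₂)
  -- the triangle on `none, Q₁, Q₂` already pairs both colours of `none`, so `Q₃` cannot be paired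
  have := color_transpose hc hF hjk (hm j) (hm k) hQ₃j hQ₃k (by simp)
  grind -funext [Owns.eq_of_color_eq, hm j, hm k]

theorem false_of_two_two_uniqueOffPeg (hc : 5 ≤ c) (hF : Feasible qs)
    (hm : ∀ t, Owns qs m t none) {i j : Fin 3} (hij : i ≠ j) {Q₁ Q₂ P₁ P₂ : Fin 3 → Fin c}
    (hQ₁ : UniqueOffPeg qs i Q₁) (hQ₂ : UniqueOffPeg qs i Q₂) (hP₁ : UniqueOffPeg qs j P₁)
    (hP₂ : UniqueOffPeg qs j P₂) (hQ : Q₁ ≠ Q₂) (hP : P₁ ≠ P₂) (h₁₁ : Q₁ ≠ P₁)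
    (h₁₂ : Q₁ ≠ P₂) (h₂₁ : Q₂ ≠ P₁) (h₂₂ : Q₂ ≠ P₂) : False := by
  obtain ⟨k, hik, hjk⟩ := Fin3.exists_ne_ne i j
  have hQ₁j := hQ₁.owns (m := m) hij.symm
  have hQ₁k := hQ₁.owns (m := m) hik.symm
  have hQ₂j := hQ₂.owns (m := m) hij.symm
  have hQ₂k := hQ₂.owns (m := m) hik.symm
  have hP₁i := hP₁.owns (m := m) hij
  have hP₁k := hP₁.owns (m := m) hjk.symm
  have hP₂i := hP₂.owns (m := m) hij
  have hP₂k := hP₂.owns (m := m) hjk.symm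
  have := color_cycle hc hF hjk (hm j) (hm k) hQ₁j hQ₁k hQ₂j hQ₂k (by simp) (by simp)
    (by simpa using hQ)
  have := color_cycle hc hF hik (hm i) (hm k) hP₁i hP₁k hP₂i hP₂k (by simp) (by simp)
    (by simpa using hP)
  have := color_rotate hF hjk hij.symm hik.symm hQ₁j hQ₁k hP₁k hP₁i (hm i) (hm j) (by simp)
  have := color_rotate hF hjk hij.symm hik.symm hQ₁j hQ₁k hP₂k hP₂i (hm i) (hm j) (by simp)
  have := color_rotate hF hjk hij.symm hik.symm hQ₂j hQ₂k hP₁k hP₁i (hm i) (hm j) (by simp)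
  have := color_rotate hF hjk hij.symm hik.symm hQ₂j hQ₂k hP₂k hP₂i (hm i) (hm j) (by simp)
  grind -funext (splits := 20) [Owns.eq_of_color_eq, hm i, hm j, hm k]

theorem false_of_two_one_one_uniqueOffPeg (hc : 5 ≤ c) (hF : Feasible qs)
    (hm : ∀ t, Owns qs m t none) {i j k : Fin 3} (hij : i ≠ j) (hik : i ≠ k) (hjk : j ≠ k)
    {Q₁ Q₂ P D : Fin 3 → Fin c}
    (hQ₁ : UniqueOffPeg qs i Q₁) (hQ₂ : UniqueOffPeg qs i Q₂) (hP : UniqueOffPeg qs j P)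
    (hD : UniqueOffPeg qs k D) (hQ : Q₁ ≠ Q₂) (h₁P : Q₁ ≠ P) (h₂P : Q₂ ≠ P) (h₁D : Q₁ ≠ D)
    (h₂D : Q₂ ≠ D) (hPD : P ≠ D) : False := by
  have hQ₁j := hQ₁.owns (m := m) hij.symm
  have hQ₁k := hQ₁.owns (m := m) hik.symm
  have hQ₂j := hQ₂.owns (m := m) hij.symm
  have hQ₂k := hQ₂.owns (m := m) hik.symm
  have hPi := hP.owns (m := m) hij
  have hPk := hP.owns (m := m) hjk.symm
  have hDi := hD.owns (m := m) hik
  have hDj := hD.owns (m := m) hjk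
  have := color_cycle hc hF hjk (hm j) (hm k) hQ₁j hQ₁k hQ₂j hQ₂k (by simp) (by simp)
    (by simpa using hQ)
  have := color_transpose hc hF hik (hm i) (hm k) hPi hPk (by simp)
  have := color_transpose hc hF hij (hm i) (hm j) hDi hDj (by simp)
  have := color_rotate hF hjk.symm hik.symm hij.symm (hm k) (hm j) hDj hDi hPi hPk (by simp)
  have := color_rotate hF hjk.symm hik.symm hij.symm hQ₁k hQ₁j hDj hDi (hm i) (hm k) (by simp)
  have := color_rotate hF hjk.symm hik.symm hij.symm hQ₂k hQ₂j hDj hDi (hm i) (hm k) (by simp)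
  have := color_rotate hF hjk.symm hik.symm hij.symm hQ₁k hQ₁j hDj hDi hPi hPk (by simpa)
  have := color_rotate hF hjk.symm hik.symm hij.symm hQ₂k hQ₂j hDj hDi hPi hPk (by simpa)
  have := color_rotate hF hjk.symm hik.symm hij.symm hQ₁k hQ₁j (hm j) (hm i) hPi hPk (by simpa)
  have := color_rotate hF hjk.symm hik.symm hij.symm hQ₂k hQ₂j (hm j) (hm i) hPi hPk (by simpa)
  grind -funext (splits := 20) [Owns.eq_of_color_eq, hm i, hm j, hm k]

end ThreePegs

theorem Fin4.fiber_cases (τ : Fin 4 → Fin 3) :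
    (∃ a b e, a ≠ b ∧ a ≠ e ∧ b ≠ e ∧ τ b = τ a ∧ τ e = τ a) ∨
    (∃ a b e d, a ≠ b ∧ a ≠ e ∧ a ≠ d ∧ b ≠ e ∧ b ≠ d ∧ e ≠ d ∧
      τ b = τ a ∧ τ d = τ e ∧ τ a ≠ τ e) ∨
    (∃ a b e d, a ≠ b ∧ a ≠ e ∧ a ≠ d ∧ b ≠ e ∧ b ≠ d ∧ e ≠ d ∧
      τ b = τ a ∧ τ a ≠ τ e ∧ τ a ≠ τ d ∧ τ e ≠ τ d) := by
  revert τ; decide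

end StaticBlackPeg

open StaticBlackPeg in
theorem statement17 (c : ℕ) (hc : 5 ≤ c) (qs : List (Fin 3 → Fin c))
    (hqs : Feasible qs)
    (hmiss : ∀ i : Fin 3, ∃ q : Fin c, ∀ Q ∈ qs, Q i ≠ q) :
    qs.countP (fun Q => decide
      ((2 ≤ occ qs 0 (Q 0) ∧ occ qs 1 (Q 1) = 1 ∧ occ qs 2 (Q 2) = 1) ∨
       (occ qs 0 (Q 0) = 1 ∧ 2 ≤ occ qs 1 (Q 1) ∧ occ qs 2 (Q 2) = 1) ∨
       (occ qs 0 (Q 0) = 1 ∧ occ qs 1 (Q 1) = 1 ∧ 2 ≤ occ qs 2 (Q 2)))) ≤ 3 := by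
  by_contra! hlt
  choose m hm using hmiss
  have hnone : ∀ t, Owns qs m t none := fun t => owns_none (hm t)
  obtain ⟨Q, hQ, hmem⟩ := List.exists_injective_fin_of_lt_countP hqs.1 hlt
  choose τ hτ using fun a =>
    exists_uniqueOffPeg (hmem a).1 (by have := of_decide_eq_true (hmem a).2; tauto)
  rcases Fin4.fiber_cases τ with ⟨a, b, e, hab, hae, hbe, hb, he⟩ |
      ⟨a, b, e, d, hab, hae, had, hbe, hbd, hed, hb, hd, hae'⟩ |
      ⟨a, b, e, d, hab, hae, had, hbe, hbd, hed, hb, hae', had', hed'⟩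
  · exact false_of_three_uniqueOffPeg hc hqs hnone (hτ a) (hb ▸ hτ b) (he ▸ hτ e)
      (hQ.ne hab) (hQ.ne hae) (hQ.ne hbe)
  · exact false_of_two_two_uniqueOffPeg hc hqs hnone hae' (hτ a) (hb ▸ hτ b) (hτ e)
      (hd ▸ hτ d) (hQ.ne hab) (hQ.ne hed) (hQ.ne hae) (hQ.ne had) (hQ.ne hbe) (hQ.ne hbd)
  · exact false_of_two_one_one_uniqueOffPeg hc hqs hnone hae' had' hed' (hτ a) (hb ▸ hτ b)
      (hτ e) (hτ d) (hQ.ne hab) (hQ.ne hae) (hQ.ne hbe) (hQ.ne had) (hQ.ne hbd) (hQ.ne hed)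
end

section
/- For the Static Black-Peg AB Game with 3 pegs and c ≥ 5 colors: if a feasible strategy contains no (1,1,1)-question and there exist two distinct pegs such that on each of them some color is missing, then the strategy contains in total at most five questions that are (1,1,≥2)-questions, (1,≥2,1)-questions, or (≥2,1,1)-questions. -/
/-!
Fix pegs `a`, `b` with missing colours `ma`, `mb`, and let `k` be the third peg. Call the colour
of a question on a peg private if no other question uses it there; the questions counted are
those with a shared colour on one peg and private colours on the other two. All the structure
comes from one observation: a private colour scores exactly one hit, for its owner, and a
missing colour none, so if certain colours did not coincide, two distinct codes assembled from
such colours would get the same answer to every question.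

Hence two questions sharing on the same peg, say `a`, are linked (`X b = Y k` or `Y b = X k`), so
such a class has at most three members, and in a class of three every member has a successor
and a predecessor. A question sharing on `k` carries `mb` on `a` or `ma` on `b`, so there are at
most two of those. A case analysis on the three class sizes excludes every total above five.
-/

namespace StaticAB

abbrev Code (c : ℕ) := Fin 3 → Fin c

variable {c : ℕ} {qs : List (Code c)}

lemma eq_of_occ_eq_one {i : Fin 3} {X Y : Code c} (hX : X ∈ qs)
    (hY : Y ∈ qs) (hocc : occ qs i (Y i) = 1) (e : X i = Y i) : X = Y := by
  rw [occ, List.countP_eq_length_filter, List.length_eq_one_iff] at hocc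
  obtain ⟨Z, hZ⟩ := hocc
  have hXZ : X ∈ [Z] := hZ ▸ List.mem_filter.mpr ⟨hX, by simp [e]⟩
  have hYZ : Y ∈ [Z] := hZ ▸ List.mem_filter.mpr ⟨hY, by simp⟩
  rw [List.mem_singleton] at hXZ hYZ
  rw [hXZ, hYZ]

lemma ite_eq_of_occ_eq_one {i : Fin 3} {P W : Code c} (hP : P ∈ qs)
    (hW : W ∈ qs) (hocc : occ qs i (W i) = 1) :
    (if P i = W i then 1 else 0 : ℕ) = if P = W then 1 else 0 := by
  by_cases h : P = W
  · simp [h]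
  · simp [h, show ¬P i = W i from fun e => h (eq_of_occ_eq_one hP hW hocc e)]

lemma eq_of_forall_answer_eq (hqs : Feasible qs) {S S' : Code c}
    (hS : Function.Injective S) (hS' : Function.Injective S')
    (h : ∀ P ∈ qs, answer P S = answer P S') : S = S' :=
  hqs.2.2 S S' hS hS' (List.map_congr_left h)

lemma exists_ne_of_five_le (hc : 5 ≤ c) (x₁ x₂ x₃ x₄ : Fin c) :
    ∃ x, x ≠ x₁ ∧ x ≠ x₂ ∧ x ≠ x₃ ∧ x ≠ x₄ := by
  have hcard : ({x₁, x₂, x₃, x₄} : Finset (Fin c)).card <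
      (Finset.univ : Finset (Fin c)).card :=
    Finset.card_le_four.trans_lt (by simp; omega)
  obtain ⟨x, -, hx⟩ := Finset.exists_mem_notMem_of_card_lt_card hcard
  exact ⟨x, by simpa [not_or] using hx⟩

section Pegs

variable {a b k : Fin 3}

def triple (a b : Fin 3) (x y z : Fin c) : Code c :=
  fun i => if i = a then x else if i = b then y else z

lemma eq_or_eq_or_eq (hab : a ≠ b) (hak : a ≠ k) (hbk : b ≠ k) (i : Fin 3) :
    i = a ∨ i = b ∨ i = k := by
  revert a b k i; decide

lemma univ_eq_of_ne (hab : a ≠ b) (hak : a ≠ k) (hbk : b ≠ k) :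
    (Finset.univ : Finset (Fin 3)) = {a, b, k} := by
  revert a b k; decide

lemma triple_injective (hab : a ≠ b) (hak : a ≠ k) (hbk : b ≠ k) {x y z : Fin c}
    (hxy : x ≠ y) (hxz : x ≠ z) (hyz : y ≠ z) : Function.Injective (triple a b x y z) := by
  intro i j h
  rcases eq_or_eq_or_eq hab hak hbk i with rfl | rfl | rfl <;>
    rcases eq_or_eq_or_eq hab hak hbk j with rfl | rfl | rfl <;>
    simp_all [triple, eq_comm, hab.symm, hak.symm, hbk.symm]

lemma answer_triple (hab : a ≠ b) (hak : a ≠ k) (hbk : b ≠ k) (P : Code c) (x y z : Fin c) :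
    answer P (triple a b x y z) =
      (if P a = x then 1 else 0) + (if P b = y then 1 else 0) + (if P k = z then 1 else 0) := by
  rw [answer, Finset.card_filter, univ_eq_of_ne hab hak hbk, Finset.sum_insert (by simp [hab, hak]),
    Finset.sum_pair hbk, ← add_assoc]
  simp [triple, hab.symm, hak.symm, hbk.symm]

end Pegs

def PrivateOn (qs : List (Code c)) (i j : Fin 3) (X : Code c) : Prop :=
  X ∈ qs ∧ occ qs i (X i) = 1 ∧ occ qs j (X j) = 1

section Confusion

variable {a b k : Fin 3}

lemma private_link (hqs : Feasible qs) (hc : 5 ≤ c) (hab : a ≠ b) (hak : a ≠ k)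
    (hbk : b ≠ k) {X Y : Code c} (hX : PrivateOn qs b k X) (hY : PrivateOn qs b k Y)
    (hXY : X ≠ Y) :
    X b = Y k ∨ Y b = X k := by
  by_contra! h
  obtain ⟨x, hx₁, hx₂, hx₃, hx₄⟩ := exists_ne_of_five_le hc (X b) (Y k) (Y b) (X k)
  have heq : triple a b x (X b) (Y k) = triple a b x (Y b) (X k) :=
    eq_of_forall_answer_eq hqs (triple_injective hab hak hbk hx₁ hx₂ h.1)
      (triple_injective hab hak hbk hx₃ hx₄ h.2) fun P hP => by
      rw [answer_triple hab hak hbk, answer_triple hab hak hbk,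
        ite_eq_of_occ_eq_one hP hX.1 hX.2.1, ite_eq_of_occ_eq_one hP hY.1 hY.2.2,
        ite_eq_of_occ_eq_one hP hY.1 hY.2.1, ite_eq_of_occ_eq_one hP hX.1 hX.2.2]
      ring
  have hb : X b = Y b := by simpa [triple, hab.symm] using congrFun heq b
  exact hXY (eq_of_occ_eq_one hX.1 hY.1 hY.2.1 hb)

lemma eq_missing_or_eq_missing (hqs : Feasible qs) (hc : 5 ≤ c) (hab : a ≠ b)
    (hak : a ≠ k) (hbk : b ≠ k) {ma mb : Fin c} (hma : ∀ P ∈ qs, P a ≠ ma)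
    (hmb : ∀ P ∈ qs, P b ≠ mb) {R : Code c} (hR : PrivateOn qs a b R) :
    R a = mb ∨ R b = ma := by
  by_contra! h
  obtain ⟨x, hx₁, hx₂, hx₃, hx₄⟩ := exists_ne_of_five_le hc (R a) mb ma (R b)
  have heq : triple a b (R a) mb x = triple a b ma (R b) x :=
    eq_of_forall_answer_eq hqs (triple_injective hab hak hbk h.1 hx₁.symm hx₂.symm)
      (triple_injective hab hak hbk h.2.symm hx₃.symm hx₄.symm) fun P hP => by
      rw [answer_triple hab hak hbk, answer_triple hab hak hbk,
        ite_eq_of_occ_eq_one hP hR.1 hR.2.1, ite_eq_of_occ_eq_one hP hR.1 hR.2.2,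
        if_neg (hmb P hP), if_neg (hma P hP)]
      ring
  have ha : R a = ma := by simpa [triple] using congrFun heq a
  exact hma R hR.1 ha

lemma coincidence_of_missing (hqs : Feasible qs) (hab : a ≠ b) (hak : a ≠ k) (hbk : b ≠ k)
    {ma mb : Fin c} (hma : ∀ P ∈ qs, P a ≠ ma) (hmb : ∀ P ∈ qs, P b ≠ mb) {X Y : Code c}
    (hX : PrivateOn qs b k X) (hY : PrivateOn qs a k Y) :
    Y a = mb ∨ Y a = X k ∨ X k = mb ∨ X b = ma ∨ Y k = ma ∨ X b = Y k := by
  by_contra! h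
  obtain ⟨h₁, h₂, h₃, h₄, h₅, h₆⟩ := h
  have heq : triple a b (Y a) mb (X k) = triple a b ma (X b) (Y k) :=
    eq_of_forall_answer_eq hqs (triple_injective hab hak hbk h₁ h₂ h₃.symm)
      (triple_injective hab hak hbk h₄.symm h₅.symm h₆) fun P hP => by
      rw [answer_triple hab hak hbk, answer_triple hab hak hbk,
        ite_eq_of_occ_eq_one hP hY.1 hY.2.1, if_neg (hmb P hP),
        ite_eq_of_occ_eq_one hP hX.1 hX.2.2, if_neg (hma P hP),
        ite_eq_of_occ_eq_one hP hX.1 hX.2.1, ite_eq_of_occ_eq_one hP hY.1 hY.2.2]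
      ring
  have ha : Y a = ma := by simpa [triple] using congrFun heq a
  exact hma Y hY.1 ha

lemma coincidence_of_three (hqs : Feasible qs) (hab : a ≠ b) (hak : a ≠ k) (hbk : b ≠ k)
    {X Y R : Code c} (hX : PrivateOn qs b k X) (hY : PrivateOn qs a k Y)
    (hR : PrivateOn qs a b R) (hRY : R ≠ Y) :
    (R a = X b ∨ R a = Y k ∨ X b = Y k) ∨ (Y a = R b ∨ Y a = X k ∨ R b = X k) := by
  by_contra! h
  obtain ⟨⟨h₁, h₂, h₃⟩, h₄, h₅, h₆⟩ := h
  have heq : triple a b (R a) (X b) (Y k) = triple a b (Y a) (R b) (X k) :=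
    eq_of_forall_answer_eq hqs (triple_injective hab hak hbk h₁ h₂ h₃)
      (triple_injective hab hak hbk h₄ h₅ h₆) fun P hP => by
      rw [answer_triple hab hak hbk, answer_triple hab hak hbk,
        ite_eq_of_occ_eq_one hP hR.1 hR.2.1, ite_eq_of_occ_eq_one hP hX.1 hX.2.1,
        ite_eq_of_occ_eq_one hP hY.1 hY.2.2, ite_eq_of_occ_eq_one hP hY.1 hY.2.1,
        ite_eq_of_occ_eq_one hP hR.1 hR.2.2, ite_eq_of_occ_eq_one hP hX.1 hX.2.2]
      ring
  have ha : R a = Y a := by simpa [triple] using congrFun heq a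
  exact hRY (eq_of_occ_eq_one hR.1 hY.1 hY.2.1 ha)

end Confusion

/-- The (≥2,1,1)-type questions whose shared colour is on peg `h`. -/
def heavyAt (qs : List (Code c)) (h : Fin 3) : Finset (Code c) :=
  {Q ∈ qs.toFinset | 2 ≤ occ qs h (Q h) ∧ ∀ i, i ≠ h → occ qs i (Q i) = 1}

section HeavyAt

variable {h i j : Fin 3} {X Y : Code c}

lemma mem_heavyAt :
    X ∈ heavyAt qs h ↔
      X ∈ qs ∧ 2 ≤ occ qs h (X h) ∧ ∀ i, i ≠ h → occ qs i (X i) = 1 := by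
  simp [heavyAt]

lemma privateOn_of_mem_heavyAt (hX : X ∈ heavyAt qs h) (hi : i ≠ h) (hj : j ≠ h) :
    PrivateOn qs i j X := by
  rw [mem_heavyAt] at hX
  exact ⟨hX.1, hX.2.2 i hi, hX.2.2 j hj⟩

lemma eq_of_mem_heavyAt (hX : X ∈ heavyAt qs h) (hY : Y ∈ qs) (hi : i ≠ h) (e : Y i = X i) :
    Y = X := by
  rw [mem_heavyAt] at hX
  exact eq_of_occ_eq_one hY hX.1 (hX.2.2 i hi) e

lemma ne_of_mem_heavyAt {h' : Fin 3} (hX : X ∈ heavyAt qs h) (hY : Y ∈ heavyAt qs h')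
    (hh : h ≠ h') : X ≠ Y := by
  rintro rfl
  have h₁ := (mem_heavyAt.mp hX).2.1
  have h₂ := (mem_heavyAt.mp hY).2.2 h hh
  omega

variable {s : Finset (Code c)} {u v : Fin c}

lemma card_le_one_of_forall_apply_eq (hs : s ⊆ heavyAt qs h) (hi : i ≠ h)
    (hu : ∀ X ∈ s, X i = u) : s.card ≤ 1 :=
  Finset.card_le_one.mpr fun X hX Y hY =>
    eq_of_mem_heavyAt (hs hY) (mem_heavyAt.mp (hs hX)).1 hi ((hu X hX).trans (hu Y hY).symm)

lemma card_le_two_of_forall_apply_eq_or (hs : s ⊆ heavyAt qs h) (hi : i ≠ h) (hj : j ≠ h)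
    (huv : ∀ X ∈ s, X i = u ∨ X j = v) : s.card ≤ 2 := by
  have hsplit : s = {X ∈ s | X i = u} ∪ {X ∈ s | X j = v} := by
    ext X
    simp only [Finset.mem_union, Finset.mem_filter]
    have := huv X
    tauto
  have hu : {X ∈ s | X i = u}.card ≤ 1 :=
    card_le_one_of_forall_apply_eq ((Finset.filter_subset _ s).trans hs) hi
      fun X hX => (Finset.mem_filter.mp hX).2
  have hv : {X ∈ s | X j = v}.card ≤ 1 :=
    card_le_one_of_forall_apply_eq ((Finset.filter_subset _ s).trans hs) hj
      fun X hX => (Finset.mem_filter.mp hX).2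
  rw [hsplit]
  exact (Finset.card_union_le _ _).trans (by omega)

lemma exists_apply_eq_of_forall_apply_eq_or (hs : s ⊆ heavyAt qs h) (hj : j ≠ h)
    (h2 : 2 ≤ s.card) (huv : ∀ X ∈ s, X i = u ∨ X j = v) : ∃ X ∈ s, X i = u := by
  by_contra! hne
  have := card_le_one_of_forall_apply_eq hs hj fun X hX => (huv X hX).resolve_left (hne X hX)
  omega

end HeavyAt

section Links

variable {a b k : Fin 3} {X : Code c}

lemma link_of_mem_erase (hqs : Feasible qs) (hc : 5 ≤ c) (hab : a ≠ b) (hak : a ≠ k)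
    (hbk : b ≠ k) (hX : X ∈ heavyAt qs a) {Y : Code c} (hY : Y ∈ (heavyAt qs a).erase X) :
    Y k = X b ∨ Y b = X k := by
  obtain ⟨hYX, hY⟩ := Finset.mem_erase.mp hY
  rcases private_link hqs hc hab hak hbk (privateOn_of_mem_heavyAt hX hab.symm hak.symm)
    (privateOn_of_mem_heavyAt hY hab.symm hak.symm) hYX.symm with e | e
  · exact Or.inl e.symm
  · exact Or.inr e

lemma card_heavyAt_le_three (hqs : Feasible qs) (hc : 5 ≤ c) (hab : a ≠ b) (hak : a ≠ k)
    (hbk : b ≠ k) : (heavyAt qs a).card ≤ 3 := by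
  by_contra! h4
  obtain ⟨X, hX⟩ := Finset.card_pos.mp (by omega : 0 < (heavyAt qs a).card)
  have := card_le_two_of_forall_apply_eq_or (Finset.erase_subset X _) hak.symm hab.symm
    fun Y hY => link_of_mem_erase hqs hc hab hak hbk hX hY
  rw [Finset.card_erase_of_mem hX] at this
  omega

lemma exists_succ_of_three_le (hqs : Feasible qs) (hc : 5 ≤ c) (hab : a ≠ b) (hak : a ≠ k)
    (hbk : b ≠ k) (h3 : 3 ≤ (heavyAt qs a).card) (hX : X ∈ heavyAt qs a) :
    ∃ Y ∈ heavyAt qs a, Y k = X b := by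
  obtain ⟨Y, hY, e⟩ := exists_apply_eq_of_forall_apply_eq_or (Finset.erase_subset X _)
    hab.symm (by rw [Finset.card_erase_of_mem hX]; omega)
    fun Y hY => link_of_mem_erase hqs hc hab hak hbk hX hY
  exact ⟨Y, Finset.mem_of_mem_erase hY, e⟩

lemma exists_link_of_two_le (hqs : Feasible qs) (hc : 5 ≤ c) (hab : a ≠ b) (hak : a ≠ k)
    (hbk : b ≠ k) (h2 : 2 ≤ (heavyAt qs a).card) :
    ∃ X ∈ heavyAt qs a, ∃ Y ∈ heavyAt qs a, X ≠ Y ∧ X b = Y k := by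
  obtain ⟨X, hX, Y, hY, hXY⟩ := Finset.one_lt_card.mp h2
  rcases private_link hqs hc hab hak hbk (privateOn_of_mem_heavyAt hX hab.symm hak.symm)
    (privateOn_of_mem_heavyAt hY hab.symm hak.symm) hXY with e | e
  · exact ⟨X, hX, Y, hY, hXY, e⟩
  · exact ⟨Y, hY, X, hX, hXY.symm, e⟩

end Links

lemma apply_ne_of_mem_heavyAt {h h' i : Fin 3} {X Y : Code c} (hX : X ∈ heavyAt qs h)
    (hY : Y ∈ heavyAt qs h') (hh : h ≠ h') (hi : i ≠ h) : Y i ≠ X i := fun e =>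
  ne_of_mem_heavyAt hX hY hh (eq_of_mem_heavyAt hX (mem_heavyAt.mp hY).1 hi e).symm

lemma apply_ne_of_three_le {a b k h : Fin 3} (hqs : Feasible qs) (hc : 5 ≤ c) (hab : a ≠ b)
    (hak : a ≠ k) (hbk : b ≠ k) (hA : 3 ≤ (heavyAt qs a).card) {X Y : Code c}
    (hX : X ∈ heavyAt qs a) (hY : Y ∈ heavyAt qs h) (hah : a ≠ h) :
    Y k ≠ X b := by
  obtain ⟨Z, hZ, e⟩ := exists_succ_of_three_le hqs hc hab hak hbk hA hX
  exact e ▸ apply_ne_of_mem_heavyAt hZ hY hah hak.symm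

structure TwoMissing (qs : List (Code c)) (a b k : Fin 3) (ma mb : Fin c) : Prop where
  feasible : Feasible qs
  five_le : 5 ≤ c
  hab : a ≠ b
  hak : a ≠ k
  hbk : b ≠ k
  missing_a : ∀ Q ∈ qs, Q a ≠ ma
  missing_b : ∀ Q ∈ qs, Q b ≠ mb

namespace TwoMissing

variable {a b k : Fin 3} {ma mb : Fin c} {X Y : Code c}

lemma symm (S : TwoMissing qs a b k ma mb) : TwoMissing qs b a k mb ma :=
  ⟨S.feasible, S.five_le, S.hab.symm, S.hbk, S.hak, S.missing_b, S.missing_a⟩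

lemma apply_ne_missing_of_three_le (S : TwoMissing qs a b k ma mb) (hA : 3 ≤ (heavyAt qs a).card)
    (hX : X ∈ heavyAt qs a) : X k ≠ mb := by
  obtain ⟨Z, hZ, e⟩ :=
    exists_succ_of_three_le S.feasible S.five_le S.hak S.hab S.hbk.symm hA hX
  exact e ▸ S.missing_b Z (mem_heavyAt.mp hZ).1

lemma coincidence_of_three_le (S : TwoMissing qs a b k ma mb) (hA : 3 ≤ (heavyAt qs a).card)
    (hX : X ∈ heavyAt qs a) (hY : Y ∈ heavyAt qs b) :
    Y a = mb ∨ X k = Y a ∨ X b = ma ∨ Y k = ma := by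
  have hXk := S.apply_ne_missing_of_three_le hA hX
  have hYk := apply_ne_of_three_le S.feasible S.five_le S.hab S.hak S.hbk hA hX hY S.hab
  have := coincidence_of_missing S.feasible S.hab S.hak S.hbk S.missing_a S.missing_b
    (privateOn_of_mem_heavyAt hX S.hab.symm S.hak.symm)
    (privateOn_of_mem_heavyAt hY S.hab S.hbk.symm)
  grind

lemma card_heavyAt_third_le_two (S : TwoMissing qs a b k ma mb) : (heavyAt qs k).card ≤ 2 :=
  card_le_two_of_forall_apply_eq_or subset_rfl S.hak S.hbk fun _ hR =>
    eq_missing_or_eq_missing S.feasible S.five_le S.hab S.hak S.hbk S.missing_a S.missing_b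
      (privateOn_of_mem_heavyAt hR S.hak S.hbk)

lemma exists_pair_third_of_two_le (S : TwoMissing qs a b k ma mb) (hK : 2 ≤ (heavyAt qs k).card) :
    ∃ R ∈ heavyAt qs k, ∃ R' ∈ heavyAt qs k,
      R ≠ R' ∧ R a = mb ∧ R' b = ma ∧ R' a = R b := by
  have hmissing : ∀ R ∈ heavyAt qs k, R a = mb ∨ R b = ma := fun _ hR =>
    eq_missing_or_eq_missing S.feasible S.five_le S.hab S.hak S.hbk S.missing_a S.missing_b
      (privateOn_of_mem_heavyAt hR S.hak S.hbk)
  obtain ⟨R, hR, R', hR', hne, hRa, hR'b⟩ :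
      ∃ R ∈ heavyAt qs k, ∃ R' ∈ heavyAt qs k, R ≠ R' ∧ R a = mb ∧ R' b = ma := by
    obtain ⟨R₁, hR₁, R₂, hR₂, hne⟩ := Finset.one_lt_card.mp hK
    have h₁ := eq_of_mem_heavyAt hR₂ (mem_heavyAt.mp hR₁).1 S.hak
    have h₂ := eq_of_mem_heavyAt hR₂ (mem_heavyAt.mp hR₁).1 S.hbk
    rcases hmissing R₁ hR₁ with e₁ | e₁ <;> rcases hmissing R₂ hR₂ with e₂ | e₂
    · exact absurd (h₁ (e₁.trans e₂.symm)) hne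
    · exact ⟨R₁, hR₁, R₂, hR₂, hne, e₁, e₂⟩
    · exact ⟨R₂, hR₂, R₁, hR₁, hne.symm, e₂, e₁⟩
    · exact absurd (h₂ (e₁.trans e₂.symm)) hne
  refine ⟨R, hR, R', hR', hne, hRa, hR'b, ?_⟩
  have := private_link S.feasible S.five_le S.hak.symm S.hbk.symm S.hab
    (privateOn_of_mem_heavyAt hR S.hak S.hbk) (privateOn_of_mem_heavyAt hR' S.hak S.hbk) hne
  have := S.missing_b R' (mem_heavyAt.mp hR').1
  grind

lemma not_three_le_three_le (S : TwoMissing qs a b k ma mb) (hA : 3 ≤ (heavyAt qs a).card)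
    (hB : 3 ≤ (heavyAt qs b).card) : False := by
  have key : ∀ X ∈ heavyAt qs a, ∀ Y ∈ heavyAt qs b, Y a = mb ∨ X b = ma := by
    intro X hX Y hY
    have := S.coincidence_of_three_le hA hX hY
    have := S.symm.apply_ne_missing_of_three_le hB hY
    have := apply_ne_of_three_le S.feasible S.five_le S.hab.symm S.hbk S.hak hB hY hX S.hab.symm
    grind
  obtain ⟨X, hX, hXb⟩ : ∃ X ∈ heavyAt qs a, X b ≠ ma := by
    by_contra! h
    have := card_le_one_of_forall_apply_eq subset_rfl S.hab.symm h
    omega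
  have := card_le_one_of_forall_apply_eq subset_rfl S.hab fun Y hY =>
    (key X hX Y hY).resolve_right hXb
  omega

lemma not_three_le_two_le_one_le (S : TwoMissing qs a b k ma mb) (hA : 3 ≤ (heavyAt qs a).card)
    (hB : 2 ≤ (heavyAt qs b).card) (hK : 1 ≤ (heavyAt qs k).card) : False := by
  obtain ⟨P₁, hP₁, P₂, hP₂, hP, e⟩ :=
    exists_link_of_two_le S.feasible S.five_le S.hab.symm S.hbk S.hak hB
  obtain ⟨R, hR⟩ := Finset.card_pos.mp (by omega : 0 < (heavyAt qs k).card)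
  have hP₁a := S.missing_a P₁ (mem_heavyAt.mp hP₁).1
  have hXk : ∀ X ∈ heavyAt qs a, X k ≠ P₂ k := fun X hX =>
    apply_ne_of_mem_heavyAt hP₂ hX S.hab.symm S.hbk.symm
  rcases eq_missing_or_eq_missing S.feasible S.five_le S.hab S.hak S.hbk S.missing_a
    S.missing_b (privateOn_of_mem_heavyAt hR S.hak S.hbk) with hRa | hRb
  · have hP₂a : P₂ a ≠ R a := apply_ne_of_mem_heavyAt hR hP₂ S.hbk.symm S.hak
    have := card_le_two_of_forall_apply_eq_or subset_rfl S.hak.symm S.hab.symm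
      (u := P₂ a) (v := ma) fun X hX => by
        have := S.coincidence_of_three_le hA hX hP₂
        grind
    omega
  · have hXb : ∀ X ∈ heavyAt qs a, X b ≠ R b := fun X hX =>
      apply_ne_of_mem_heavyAt hR hX S.hak.symm S.hbk
    have hP₂a : P₂ a = mb := by
      by_contra hne
      have := card_le_one_of_forall_apply_eq subset_rfl S.hak.symm (u := P₂ a) fun X hX => by
        have := S.coincidence_of_three_le hA hX hP₂
        have := hXb X hX
        grind
      omega
    obtain ⟨Q, hQ⟩ := Finset.card_pos.mp (by omega : 0 < (heavyAt qs a).card)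
    have hP₁k : P₁ k = ma := by
      have := S.coincidence_of_three_le hA hQ hP₁
      have : P₁ a ≠ P₂ a := fun e =>
        hP (eq_of_mem_heavyAt hP₂ (mem_heavyAt.mp hP₁).1 S.hab e)
      have := hXb Q hQ
      have := hXk Q hQ
      grind
    have := card_le_two_of_forall_apply_eq_or subset_rfl S.hab.symm S.hak.symm
      (u := R a) (v := R b) fun X hX => by
        have := coincidence_of_three S.feasible S.hab S.hak S.hbk
          (privateOn_of_mem_heavyAt hX S.hab.symm S.hak.symm)
          (privateOn_of_mem_heavyAt hP₁ S.hab S.hbk.symm)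
          (privateOn_of_mem_heavyAt hR S.hak S.hbk) (ne_of_mem_heavyAt hR hP₁ S.hbk.symm)
        have := S.missing_a R (mem_heavyAt.mp hR).1
        have := apply_ne_of_three_le S.feasible S.five_le S.hab S.hak S.hbk hA hX hP₁ S.hab
        have := hXk X hX
        grind
    omega

lemma not_three_le_one_le_two_le (S : TwoMissing qs a b k ma mb) (hA : 3 ≤ (heavyAt qs a).card)
    (hB : 1 ≤ (heavyAt qs b).card) (hK : 2 ≤ (heavyAt qs k).card) : False := by
  obtain ⟨P, hP⟩ := Finset.card_pos.mp (by omega : 0 < (heavyAt qs b).card)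
  obtain ⟨R, hR, R', hR', -, hRa, -, hR'a⟩ := S.exists_pair_third_of_two_le hK
  have hPk : P k = ma := by
    by_contra hPk
    have : P a ≠ R a := apply_ne_of_mem_heavyAt hR hP S.hbk.symm S.hak
    have := card_le_two_of_forall_apply_eq_or subset_rfl S.hak.symm S.hab.symm
      (u := P a) (v := ma) fun X hX => by
        have := S.coincidence_of_three_le hA hX hP
        grind
    omega
  have hPa : P a = R b := by
    by_contra hPa
    have := card_le_two_of_forall_apply_eq_or subset_rfl S.hak.symm S.hak.symm
      (u := P a) (v := R b) fun X hX => by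
        have := coincidence_of_three S.feasible S.hab S.hak S.hbk
          (privateOn_of_mem_heavyAt hX S.hab.symm S.hak.symm)
          (privateOn_of_mem_heavyAt hP S.hab S.hbk.symm)
          (privateOn_of_mem_heavyAt hR S.hak S.hbk) (ne_of_mem_heavyAt hR hP S.hbk.symm)
        have := S.missing_a R (mem_heavyAt.mp hR).1
        have := S.missing_b X (mem_heavyAt.mp hX).1
        have := apply_ne_of_three_le S.feasible S.five_le S.hab S.hak S.hbk hA hX hP S.hab
        grind
    omega
  exact apply_ne_of_mem_heavyAt hR' hP S.hbk.symm S.hak (hPa.trans hR'a.symm)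

lemma not_two_le_two_le_two_le (S : TwoMissing qs a b k ma mb) (hA : 2 ≤ (heavyAt qs a).card)
    (hB : 2 ≤ (heavyAt qs b).card) (hK : 2 ≤ (heavyAt qs k).card) : False := by
  obtain ⟨Q₁, hQ₁, Q₂, hQ₂, -, hQ⟩ :=
    exists_link_of_two_le S.feasible S.five_le S.hab S.hak S.hbk hA
  obtain ⟨P₁, hP₁, P₂, hP₂, -, hP⟩ :=
    exists_link_of_two_le S.feasible S.five_le S.hab.symm S.hbk S.hak hB
  obtain ⟨R, hR, R', hR', hRR', hRa, hR'b, hR'a⟩ := S.exists_pair_third_of_two_le hK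
  have hQ₁P₁ := coincidence_of_missing S.feasible S.hab S.hak S.hbk S.missing_a S.missing_b
    (privateOn_of_mem_heavyAt hQ₁ S.hab.symm S.hak.symm)
    (privateOn_of_mem_heavyAt hP₁ S.hab S.hbk.symm)
  have hQ₁P₁R := coincidence_of_three S.feasible S.hab S.hak S.hbk
    (privateOn_of_mem_heavyAt hQ₁ S.hab.symm S.hak.symm)
    (privateOn_of_mem_heavyAt hP₁ S.hab S.hbk.symm)
    (privateOn_of_mem_heavyAt hR S.hak S.hbk) (ne_of_mem_heavyAt hR hP₁ S.hbk.symm)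
  have hQ₁P₁R' := coincidence_of_three S.feasible S.hab S.hak S.hbk
    (privateOn_of_mem_heavyAt hQ₁ S.hab.symm S.hak.symm)
    (privateOn_of_mem_heavyAt hP₁ S.hab S.hbk.symm)
    (privateOn_of_mem_heavyAt hR' S.hak S.hbk) (ne_of_mem_heavyAt hR' hP₁ S.hbk.symm)
  have := apply_ne_of_mem_heavyAt hP₂ hQ₁ S.hab.symm S.hbk.symm
  have := apply_ne_of_mem_heavyAt hQ₂ hP₁ S.hab S.hak.symm
  have := apply_ne_of_mem_heavyAt hR hQ₁ S.hak.symm S.hbk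
  have := apply_ne_of_mem_heavyAt hR' hQ₁ S.hak.symm S.hbk
  have := apply_ne_of_mem_heavyAt hR hP₁ S.hbk.symm S.hak
  have := apply_ne_of_mem_heavyAt hR' hP₁ S.hbk.symm S.hak
  have := fun e => hRR' (eq_of_mem_heavyAt hR' (mem_heavyAt.mp hR).1 S.hak e)
  have := fun e => hRR' (eq_of_mem_heavyAt hR' (mem_heavyAt.mp hR).1 S.hbk e)
  have := S.missing_a P₁ (mem_heavyAt.mp hP₁).1
  have := S.missing_a R (mem_heavyAt.mp hR).1
  have := S.missing_b Q₁ (mem_heavyAt.mp hQ₁).1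
  have := S.missing_b R' (mem_heavyAt.mp hR').1
  -- The facts above reduce `hQ₁P₁R'` to `R' a = P₁ k ∨ R' b = Q₁ k` and `hQ₁P₁R` to
  -- `R a = P₁ k ∨ R b = Q₁ k`; each combination contradicts `R ≠ R'`, `R' a = R b` or `hQ₁P₁`.
  grind

lemma card_add_card_add_card_le_five (S : TwoMissing qs a b k ma mb) :
    (heavyAt qs a).card + (heavyAt qs b).card + (heavyAt qs k).card ≤ 5 := by
  have hA := card_heavyAt_le_three S.feasible S.five_le S.hab S.hak S.hbk
  have hB := card_heavyAt_le_three S.feasible S.five_le S.hab.symm S.hbk S.hak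
  have hK := S.card_heavyAt_third_le_two
  set nA := (heavyAt qs a).card
  set nB := (heavyAt qs b).card
  set nK := (heavyAt qs k).card
  by_contra! hsum
  rcases (by omega : (3 ≤ nA ∧ 3 ≤ nB) ∨ (3 ≤ nA ∧ 2 ≤ nB ∧ 1 ≤ nK) ∨
      (2 ≤ nA ∧ 3 ≤ nB ∧ 1 ≤ nK) ∨ (3 ≤ nA ∧ 1 ≤ nB ∧ 2 ≤ nK) ∨
      (1 ≤ nA ∧ 3 ≤ nB ∧ 2 ≤ nK) ∨ (2 ≤ nA ∧ 2 ≤ nB ∧ 2 ≤ nK)) with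
    h | h | h | h | h | h
  · exact S.not_three_le_three_le h.1 h.2
  · exact S.not_three_le_two_le_one_le h.1 h.2.1 h.2.2
  · exact S.symm.not_three_le_two_le_one_le h.2.1 h.1 h.2.2
  · exact S.not_three_le_one_le_two_le h.1 h.2.1 h.2.2
  · exact S.symm.not_three_le_one_le_two_le h.2.1 h.1 h.2.2
  · exact S.not_two_le_two_le_two_le h.1 h.2.1 h.2.2

end TwoMissing

lemma countP_eq_sum_card_heavyAt (hqs : qs.Nodup) :
    qs.countP (fun Q => decide
      ((2 ≤ occ qs 0 (Q 0) ∧ occ qs 1 (Q 1) = 1 ∧ occ qs 2 (Q 2) = 1) ∨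
       (occ qs 0 (Q 0) = 1 ∧ 2 ≤ occ qs 1 (Q 1) ∧ occ qs 2 (Q 2) = 1) ∨
       (occ qs 0 (Q 0) = 1 ∧ occ qs 1 (Q 1) = 1 ∧ 2 ≤ occ qs 2 (Q 2)))) =
      ∑ h, (heavyAt qs h).card := by
  rw [List.countP_eq_length_filter, ← List.toFinset_card_of_nodup (hqs.filter _),
    ← Finset.card_biUnion fun h _ h' _ hh =>
      Finset.disjoint_left.mpr fun _ hX hX' => ne_of_mem_heavyAt hX hX' hh rfl]
  congr 1
  ext Q
  simp [mem_heavyAt, Fin.exists_fin_succ, Fin.forall_fin_succ]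
  tauto

end StaticAB

theorem statement19_general (c : ℕ) (hc : 5 ≤ c) (qs : List (Fin 3 → Fin c))
    (hqs : Feasible qs)
    (hmiss : ∃ i j : Fin 3, i ≠ j ∧ (∃ q : Fin c, ∀ Q ∈ qs, Q i ≠ q) ∧
      (∃ q : Fin c, ∀ Q ∈ qs, Q j ≠ q)) :
    qs.countP (fun Q => decide
      ((2 ≤ occ qs 0 (Q 0) ∧ occ qs 1 (Q 1) = 1 ∧ occ qs 2 (Q 2) = 1) ∨
       (occ qs 0 (Q 0) = 1 ∧ 2 ≤ occ qs 1 (Q 1) ∧ occ qs 2 (Q 2) = 1) ∨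
       (occ qs 0 (Q 0) = 1 ∧ occ qs 1 (Q 1) = 1 ∧ 2 ≤ occ qs 2 (Q 2)))) ≤ 5 := by
  obtain ⟨a, b, hab, ⟨ma, hma⟩, ⟨mb, hmb⟩⟩ := hmiss
  obtain ⟨k, hak, hbk⟩ : ∃ k : Fin 3, a ≠ k ∧ b ≠ k :=
    (by decide : ∀ a b : Fin 3, ∃ k, a ≠ k ∧ b ≠ k) a b
  have S : StaticAB.TwoMissing qs a b k ma mb := ⟨hqs, hc, hab, hak, hbk, hma, hmb⟩
  rw [StaticAB.countP_eq_sum_card_heavyAt hqs.1, StaticAB.univ_eq_of_ne hab hak hbk,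
    Finset.sum_insert (by simp [hab, hak]), Finset.sum_pair hbk, ← add_assoc]
  exact S.card_add_card_add_card_le_five

theorem statement19 (c : ℕ) (hc : 5 ≤ c) (qs : List (Fin 3 → Fin c))
    (hqs : Feasible qs)
    (hno : ∀ Q ∈ qs, ¬ ∀ i : Fin 3, occ qs i (Q i) = 1)
    (hmiss : ∃ i j : Fin 3, i ≠ j ∧ (∃ q : Fin c, ∀ Q ∈ qs, Q i ≠ q) ∧
      (∃ q : Fin c, ∀ Q ∈ qs, Q j ≠ q)) :
    qs.countP (fun Q => decide
      ((2 ≤ occ qs 0 (Q 0) ∧ occ qs 1 (Q 1) = 1 ∧ occ qs 2 (Q 2) = 1) ∨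
       (occ qs 0 (Q 0) = 1 ∧ 2 ≤ occ qs 1 (Q 1) ∧ occ qs 2 (Q 2) = 1) ∨
       (occ qs 0 (Q 0) = 1 ∧ occ qs 1 (Q 1) = 1 ∧ 2 ≤ occ qs 2 (Q 2)))) ≤ 5 :=
  statement19_general c hc qs hqs hmiss
end
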